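/- arXiv:1008.2529 — 9 statements merged into one kernel-verified Lean document; each statement's English description precedes it below -/
import Mathlib

section
/- Let A be a self-adjoint operator and ρ a density operator (positive semidefinite with trace 1) on a finite-dimensional complex Hilbert space. If f is a convex function on the convex hull of the spectrum of A, then f(Tr(Aρ)) ≤ Tr(f(A)ρ). -/
/-!
Diagonalize `A = U diag(λ) U⋆`. For every `g`, `Tr (g(A) ρ) = ∑ᵢ pᵢ g(λᵢ)` with `pᵢ` the
diagonal entries of `U⋆ ρ U`; when `ρ` is a density matrix these weights are nonnegative and
sum to `Tr ρ = 1`, so the claim is the finite Jensen inequality for `f` at the eigenvalues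
with weights `p`.
-/

open ComplexOrder

namespace Matrix.IsHermitian

variable {n 𝕜 : Type*} [RCLike 𝕜] [Fintype n] [DecidableEq n] {A : Matrix n n 𝕜}
  (hA : A.IsHermitian)

noncomputable def spectralWeight (ρ : Matrix n n 𝕜) (i : n) : ℝ :=
  RCLike.re ((star (hA.eigenvectorUnitary : Matrix n n 𝕜) * ρ * hA.eigenvectorUnitary) i i)

lemma re_trace_cfc_mul (g : ℝ → ℝ) (ρ : Matrix n n 𝕜) :
    RCLike.re (cfc g A * ρ).trace = ∑ i, hA.spectralWeight ρ i * g (hA.eigenvalues i) := by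
  set U : Matrix n n 𝕜 := ↑hA.eigenvectorUnitary
  set D : Matrix n n 𝕜 := diagonal (RCLike.ofReal ∘ g ∘ hA.eigenvalues)
  have hcyc : (U * D * star U * ρ).trace = (D * (star U * ρ * U)).trace := by
    rw [show U * D * star U * ρ = (U * D) * (star U * ρ) by simp only [Matrix.mul_assoc],
      trace_mul_comm (U * D), trace_mul_comm D]
    simp only [Matrix.mul_assoc]
  rw [hA.cfc_eq, IsHermitian.cfc, Unitary.conjStarAlgAut_apply, hcyc, trace, map_sum]
  simp [D, U, spectralWeight, mul_comm]

lemma re_trace_mul (ρ : Matrix n n 𝕜) :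
    RCLike.re (A * ρ).trace = ∑ i, hA.spectralWeight ρ i * hA.eigenvalues i := by
  simpa only [cfc_id ℝ A hA.isSelfAdjoint, id] using hA.re_trace_cfc_mul id ρ

lemma spectralWeight_nonneg {ρ : Matrix n n 𝕜} (hρ : ρ.PosSemidef) (i : n) :
    0 ≤ hA.spectralWeight ρ i :=
  (RCLike.nonneg_iff.mp
    (hρ.conjTranspose_mul_mul_same (hA.eigenvectorUnitary : Matrix n n 𝕜)).diag_nonneg).1

lemma sum_spectralWeight (ρ : Matrix n n 𝕜) :
    ∑ i, hA.spectralWeight ρ i = RCLike.re ρ.trace := by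
  set U : Matrix n n 𝕜 := ↑hA.eigenvectorUnitary
  calc ∑ i, hA.spectralWeight ρ i = RCLike.re (star U * ρ * U).trace := by
        simp only [spectralWeight, trace, diag_apply, map_sum, U]
    _ = RCLike.re ρ.trace := by
        rw [trace_mul_cycle, Unitary.mul_star_self_of_mem hA.eigenvectorUnitary.2, one_mul]

end Matrix.IsHermitian

/-- **Jensen's inequality for expectation values.** If `A` is a Hermitian matrix, `ρ` a
density matrix (positive semidefinite of trace one), and `f` convex on the convex hull
of the spectrum of `A`, then `f (Tr (A ρ)) ≤ Tr (f(A) ρ)`, where `f(A)` is given by the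
continuous functional calculus.  (Both traces are in fact real numbers.) -/
theorem jensen_trace_inequality {n : ℕ} (A ρ : Matrix (Fin n) (Fin n) ℂ)
    (hA : A.IsHermitian) (hρ : ρ.PosSemidef) (hρ1 : ρ.trace = 1)
    (f : ℝ → ℝ) (hf : ConvexOn ℝ (convexHull ℝ (spectrum ℝ A)) f) :
    f ((A * ρ).trace.re) ≤ ((cfc f A * ρ).trace).re := by
  have hjensen := hf.map_sum_le (t := Finset.univ) (fun i _ => hA.spectralWeight_nonneg hρ i)
    (by rw [hA.sum_spectralWeight, hρ1, RCLike.one_re])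
    (fun i _ => subset_convexHull ℝ _ (hA.eigenvalues_mem_spectrum_real i))
  rw [← RCLike.re_to_complex, ← RCLike.re_to_complex, hA.re_trace_mul, hA.re_trace_cfc_mul]
  simpa only [smul_eq_mul] using hjensen
end

section
/- Let B be positive semidefinite in A₁ and Φ : A₁ → A₂ positive with Φ*(Φ(B)⁰) ≤ I. If Tr Φ(B) = Tr B, then for every function f on the spectrum of B with f(0) = 0 one has f(B)·Φ*(Φ(B)⁰) = Φ*(Φ(B)⁰)·f(B) = f(B). -/
open Matrix ComplexOrder

/-- `P` is the support projection of the matrix `M`: the orthogonal projection onto the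
range of `M`. -/
def IsSupportProjection {k : ℕ} (M P : Matrix (Fin k) (Fin k) ℂ) : Prop :=
  P.IsHermitian ∧ P * P = P ∧ LinearMap.range P.mulVecLin = LinearMap.range M.mulVecLin

/-! With `P = Φ(B)⁰` we have `P Φ(B) = Φ(B)`, so `Tr (B Φ*(P)) = Tr (P Φ(B)) = Tr Φ(B) = Tr B`,
i.e. `Tr (B (1 - Φ*(P))) = 0`. A product of two positive semidefinite matrices with zero trace
vanishes, hence `B Φ*(P) = Φ*(P) B = B`. Since `f 0 = 0`, `f(B) = B g(B) = g(B) B` with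
`g x = f x / x`, and the identities pass from `B` to `f(B)`. -/

namespace Matrix

theorem mul_eq_right_of_isIdempotentElem_of_range_le {m n R : Type*} [Fintype m] [Fintype n]
    [CommSemiring R] {P : Matrix m m R} {M : Matrix m n R} (hP : IsIdempotentElem P)
    (hM : LinearMap.range M.mulVecLin ≤ LinearMap.range P.mulVecLin) : P * M = M := by
  refine ext_iff_mulVec.mpr fun v => ?_
  obtain ⟨w, hw⟩ := hM ⟨v, rfl⟩
  rw [mulVecLin_apply, mulVecLin_apply] at hw
  rw [← mulVec_mulVec, ← hw, mulVec_mulVec, hP.eq]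

open scoped MatrixOrder in
/-- Writing `A = XᴴX` and `B = YᴴY`, `Tr (AB) = ‖XYᴴ‖₂²`, so `XYᴴ = 0`. -/
theorem PosSemidef.mul_eq_zero_of_trace_mul_eq_zero {n 𝕜 : Type*} [Fintype n] [RCLike 𝕜]
    {A B : Matrix n n 𝕜} (hA : A.PosSemidef) (hB : B.PosSemidef) (h : (A * B).trace = 0) :
    A * B = 0 := by
  classical
  obtain ⟨X, rfl⟩ := CStarAlgebra.nonneg_iff_eq_star_mul_self.mp hA.nonneg
  obtain ⟨Y, rfl⟩ := CStarAlgebra.nonneg_iff_eq_star_mul_self.mp hB.nonneg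
  simp only [star_eq_conjTranspose] at h ⊢
  have hXY : X * Yᴴ = 0 := by
    rw [← trace_conjTranspose_mul_self_eq_zero_iff, ← h, conjTranspose_mul,
      conjTranspose_conjTranspose, Matrix.mul_assoc, trace_mul_comm]
    simp only [Matrix.mul_assoc]
  calc Xᴴ * X * (Yᴴ * Y) = Xᴴ * (X * Yᴴ) * Y := by simp only [Matrix.mul_assoc]
    _ = 0 := by rw [hXY, Matrix.mul_zero, Matrix.zero_mul]

end Matrix

section CFC

variable {A : Type*} [Ring A] [StarRing A] [Algebra ℝ A] [TopologicalSpace A]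
  [ContinuousFunctionalCalculus ℝ A IsSelfAdjoint] {a : A} {f : ℝ → ℝ}

theorem cfc_eq_mul_cfc_div_self (ha : IsSelfAdjoint a) (hfin : (spectrum ℝ a).Finite)
    (hf : f 0 = 0) : cfc f a = a * cfc (fun x => f x / x) a := by
  have hfx : f = fun x => x * (f x / x) := by
    ext x
    rcases eq_or_ne x 0 with rfl | hx
    · simp [hf]
    · field_simp
  conv_lhs => rw [hfx]
  rw [cfc_mul _ _ a (hfin.continuousOn _) (hfin.continuousOn _), cfc_id' ℝ a ha]

theorem cfc_eq_cfc_div_self_mul (ha : IsSelfAdjoint a) (hfin : (spectrum ℝ a).Finite)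
    (hf : f 0 = 0) : cfc f a = cfc (fun x => f x / x) a * a := by
  rw [cfc_eq_mul_cfc_div_self ha hfin hf]
  simpa only [cfc_id' ℝ a ha] using (cfc_commute_cfc (fun x : ℝ => x) (fun x => f x / x) a).eq

theorem cfc_mul_eq_left_of_mul_eq_left (ha : IsSelfAdjoint a) (hfin : (spectrum ℝ a).Finite)
    (hf : f 0 = 0) {q : A} (hq : a * q = a) : cfc f a * q = cfc f a := by
  rw [cfc_eq_cfc_div_self_mul ha hfin hf, mul_assoc, hq]

theorem mul_cfc_eq_right_of_mul_eq_right (ha : IsSelfAdjoint a) (hfin : (spectrum ℝ a).Finite)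
    (hf : f 0 = 0) {q : A} (hq : q * a = a) : q * cfc f a = cfc f a := by
  rw [cfc_eq_mul_cfc_div_self ha hfin hf, ← mul_assoc, hq]

end CFC

/-- If `B ≥ 0`, `Φ` is a positive linear map with Hilbert–Schmidt adjoint `Ψ = Φ*`
satisfying `Φ*(Φ(B)⁰) ≤ I`, and `Tr Φ(B) = Tr B`, then for every function `f` (on the
spectrum of `B`) with `f 0 = 0` one has
`f(B) · Φ*(Φ(B)⁰) = Φ*(Φ(B)⁰) · f(B) = f(B)`, with `f(B)` given by functional calculus. -/
theorem cfc_mul_adjoint_support_of_trace_eq {m k : ℕ}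
    (Φ : Matrix (Fin m) (Fin m) ℂ →ₗ[ℂ] Matrix (Fin k) (Fin k) ℂ)
    (Ψ : Matrix (Fin k) (Fin k) ℂ →ₗ[ℂ] Matrix (Fin m) (Fin m) ℂ)
    (hΦ : ∀ X : Matrix (Fin m) (Fin m) ℂ, X.PosSemidef → (Φ X).PosSemidef)
    (hadj : ∀ (X : Matrix (Fin m) (Fin m) ℂ) (Y : Matrix (Fin k) (Fin k) ℂ),
      ((Φ X)ᴴ * Y).trace = (Xᴴ * Ψ Y).trace)
    (B : Matrix (Fin m) (Fin m) ℂ) (hB : B.PosSemidef)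
    (P : Matrix (Fin k) (Fin k) ℂ) (hP : IsSupportProjection (Φ B) P)
    (hle : (1 - Ψ P).PosSemidef)
    (htr : (Φ B).trace = B.trace) :
    ∀ f : ℝ → ℝ, f 0 = 0 →
      cfc f B * Ψ P = cfc f B ∧ Ψ P * cfc f B = cfc f B := by
  obtain ⟨-, hPP, hrange⟩ := hP
  have hPΦB : P * Φ B = Φ B := mul_eq_right_of_isIdempotentElem_of_range_le hPP hrange.ge
  have htrace : (B * (1 - Ψ P)).trace = 0 := by
    have hBΨP : (B * Ψ P).trace = B.trace :=
      calc (B * Ψ P).trace = (Bᴴ * Ψ P).trace := by rw [hB.isHermitian.eq]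
        _ = ((Φ B)ᴴ * P).trace := (hadj B P).symm
        _ = (P * Φ B).trace := by rw [(hΦ B hB).isHermitian.eq, trace_mul_comm]
        _ = B.trace := by rw [hPΦB, htr]
    rw [Matrix.mul_sub, Matrix.mul_one, trace_sub, hBΨP, sub_self]
  have hBΨ : B * Ψ P = B := by
    have := hB.mul_eq_zero_of_trace_mul_eq_zero hle htrace
    rwa [Matrix.mul_sub, Matrix.mul_one, sub_eq_zero, eq_comm] at this
  have hΨB : Ψ P * B = B := by
    have := hle.mul_eq_zero_of_trace_mul_eq_zero hB (by rwa [trace_mul_comm])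
    rwa [Matrix.sub_mul, Matrix.one_mul, sub_eq_zero, eq_comm] at this
  intro f hf
  exact ⟨cfc_mul_eq_left_of_mul_eq_left hB.isHermitian finite_real_spectrum hf hBΨ,
    mul_cfc_eq_right_of_mul_eq_right hB.isHermitian finite_real_spectrum hf hΨB⟩
end

section
/- Let A, B be positive semidefinite operators and Φ a trace non-increasing positive linear map between matrix algebras with Tr Φ(A) = Tr A. Then Tr(Φ(B)·Φ(A)⁰) ≥ Tr(B·A⁰) and Tr(Φ(B)(I − Φ(A)⁰)) ≤ Tr(B(I − A⁰)). -/
open Matrix ComplexOrder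

/-!
Let `Φ†` be the dual of `Φ` for the trace pairing, `Tr (X Φ†(Y)) = Tr (Φ(X) Y)`, and put
`R = Φ†(Q)`. Positivity of `Φ` makes `Φ†` positive, and trace non-increase gives `Φ†(1) ≤ 1`,
so `0 ≤ R ≤ 1`. Now `Tr (A (1 - R)) = Tr A - Tr (Φ(A) Q) = Tr A - Tr Φ(A) = 0`, and for
positive matrices a vanishing trace of the product forces the product to vanish: `(1 - R) A = 0`,
hence `R P = P` and therefore `P ≤ R`. Thus `Tr (B P) ≤ Tr (B R) = Tr (Φ(B) Q)`, and the second
inequality follows from the first together with `Tr Φ(B) ≤ Tr B`.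
-/

open scoped MatrixOrder

theorem IsStarProjection.le_of_nonneg_of_mul_eq_right {R : Type*} [Ring R] [PartialOrder R]
    [StarRing R] [StarOrderedRing R] {p r : R} (hp : IsStarProjection p) (hr : 0 ≤ r)
    (hrp : r * p = p) : p ≤ r := by
  have hpr : p * r = p := by
    simpa only [star_mul, hr.star_eq, hp.isSelfAdjoint.star_eq] using congrArg star hrp
  have hconj : star (1 - p) * r * (1 - p) = r - p := by
    rw [star_sub, star_one, hp.isSelfAdjoint.star_eq]
    simp only [sub_mul, mul_sub, one_mul, mul_one, hrp, hpr, hp.isIdempotentElem.eq]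
    abel
  exact sub_nonneg.mp (hconj ▸ star_left_conjugate_nonneg hr (1 - p))

namespace Matrix

theorem mul_eq_zero_of_range_le {R l m n o : Type*} [CommSemiring R] [Fintype m] [Fintype n]
    [Fintype o] [DecidableEq o] {M : Matrix l m R} {A : Matrix m n R} {P : Matrix m o R}
    (hMA : M * A = 0) (hPA : LinearMap.range P.mulVecLin ≤ LinearMap.range A.mulVecLin) :
    M * P = 0 := by
  have hA : LinearMap.range A.mulVecLin ≤ LinearMap.ker M.mulVecLin := by
    rw [LinearMap.range_le_ker_iff, ← mulVecLin_mul, hMA, mulVecLin_zero]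
  have hP := LinearMap.range_le_ker_iff.mp (hPA.trans hA)
  rw [← mulVecLin_mul, ← toLin'_apply'] at hP
  exact toLin'.map_eq_zero_iff.mp hP

theorem mul_eq_self_of_range_le {R m n : Type*} [CommRing R] [Fintype m] [DecidableEq m]
    [Fintype n] [DecidableEq n] {Q : Matrix m m R} {N : Matrix m n R} (hQ : IsIdempotentElem Q)
    (hNQ : LinearMap.range N.mulVecLin ≤ LinearMap.range Q.mulVecLin) : Q * N = N := by
  have := mul_eq_zero_of_range_le hQ.one_sub_mul_self hNQ
  rwa [Matrix.sub_mul, Matrix.one_mul, sub_eq_zero, eq_comm] at this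

theorem dotProduct_mulVec_eq_trace {R n : Type*} [CommSemiring R] [StarRing R] [Fintype n]
    (M : Matrix n n R) (x : n → R) : star x ⬝ᵥ (M *ᵥ x) = (vecMulVec x (star x) * M).trace := by
  rw [vecMulVec_mul, trace_vecMulVec, dotProduct_mulVec, dotProduct_comm]

section PosSemidef

variable {𝕜 n : Type*} [RCLike 𝕜] [Fintype n] [DecidableEq n]

theorem PosSemidef.trace_mul_nonneg {S T : Matrix n n 𝕜} (hS : S.PosSemidef)
    (hT : T.PosSemidef) : 0 ≤ (S * T).trace := by
  obtain ⟨C, rfl⟩ := CStarAlgebra.nonneg_iff_eq_star_mul_self.mp hS.nonneg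
  rw [star_eq_conjTranspose, mul_assoc, trace_mul_comm]
  exact (hT.mul_mul_conjTranspose_same C).trace_nonneg

theorem PosSemidef.trace_mul_le_trace_mul {B X Y : Matrix n n 𝕜} (hB : B.PosSemidef)
    (hXY : X ≤ Y) : (B * X).trace ≤ (B * Y).trace := by
  have := hB.trace_mul_nonneg (le_iff.mp hXY)
  rwa [mul_sub, trace_sub, sub_nonneg] at this

theorem PosSemidef.mul_eq_zero_of_trace_mul_eq_zero_s7 {S T : Matrix n n 𝕜} (hS : S.PosSemidef)
    (hT : T.PosSemidef) (h : (S * T).trace = 0) : S * T = 0 := by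
  obtain ⟨C, rfl⟩ := CStarAlgebra.nonneg_iff_eq_star_mul_self.mp hS.nonneg
  obtain ⟨D, rfl⟩ := CStarAlgebra.nonneg_iff_eq_mul_star_self.mp hT.nonneg
  simp only [star_eq_conjTranspose] at h ⊢
  have hCD : C * D = 0 := by
    rw [← trace_conjTranspose_mul_self_eq_zero_iff, ← h, conjTranspose_mul, mul_assoc,
      trace_mul_comm]
    simp only [mul_assoc]
  rw [mul_assoc, ← mul_assoc C, hCD, zero_mul, mul_zero]

/-- Over `ℂ`, a matrix whose quadratic form takes real values is automatically Hermitian. -/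
theorem posSemidef_of_forall_dotProduct_mulVec_nonneg {M : Matrix n n ℂ}
    (hM : ∀ x, 0 ≤ star x ⬝ᵥ (M *ᵥ x)) : M.PosSemidef := by
  rw [← isPositive_toEuclideanLin_iff, LinearMap.isPositive_iff_complex]
  intro x
  obtain ⟨r, hr, hz⟩ := RCLike.nonneg_iff_exists_ofReal.mp (hM x.ofLp)
  have : x.ofLp ⬝ᵥ star (M *ᵥ x.ofLp) = star (star x.ofLp ⬝ᵥ M *ᵥ x.ofLp) := by
    rw [star_dotProduct, star_star, dotProduct_comm]
  simp [EuclideanSpace.inner_eq_star_dotProduct, toLpLin_apply, this, ← hz, hr]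

end PosSemidef

section traceDual

variable {R m k : Type*} [CommSemiring R] [Fintype m] [DecidableEq m] [Fintype k]

def traceDual (Φ : Matrix m m R →ₗ[R] Matrix k k R) (Y : Matrix k k R) : Matrix m m R :=
  of fun i j => (Φ (single j i 1) * Y).trace

theorem trace_mul_traceDual (Φ : Matrix m m R →ₗ[R] Matrix k k R) (X : Matrix m m R)
    (Y : Matrix k k R) : (X * traceDual Φ Y).trace = (Φ X * Y).trace := by
  have hX : X = ∑ i, ∑ j, X i j • single i j (1 : R) := by
    simpa only [smul_single, smul_eq_mul, mul_one] using matrix_eq_sum_single X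
  conv_rhs => rw [hX]
  simp only [map_sum, map_smul, Finset.sum_mul, smul_mul_assoc, trace_sum, trace_smul,
    smul_eq_mul]
  simp [trace, mul_apply, traceDual]

theorem dotProduct_traceDual_mulVec [StarRing R] (Φ : Matrix m m R →ₗ[R] Matrix k k R)
    (Y : Matrix k k R) (x : m → R) :
    star x ⬝ᵥ (traceDual Φ Y *ᵥ x) = (Φ (vecMulVec x (star x)) * Y).trace := by
  rw [dotProduct_mulVec_eq_trace, trace_mul_traceDual]

end traceDual

section PositiveMap

variable {m k : Type*} [Fintype m] [DecidableEq m] [Fintype k] [DecidableEq k]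
  (Φ : Matrix m m ℂ →ₗ[ℂ] Matrix k k ℂ)
  (hΦ : ∀ X : Matrix m m ℂ, X.PosSemidef → (Φ X).PosSemidef)
include hΦ

theorem posSemidef_traceDual {Y : Matrix k k ℂ} (hY : Y.PosSemidef) :
    (traceDual Φ Y).PosSemidef :=
  posSemidef_of_forall_dotProduct_mulVec_nonneg fun x => by
    rw [dotProduct_traceDual_mulVec]
    exact (hΦ _ (posSemidef_vecMulVec_self_star x)).trace_mul_nonneg hY

theorem posSemidef_one_sub_traceDual
    (hΦtr : ∀ X : Matrix m m ℂ, X.PosSemidef → (Φ X).trace ≤ X.trace)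
    {Y : Matrix k k ℂ} (hY : (1 - Y).PosSemidef) : (1 - traceDual Φ Y).PosSemidef := by
  refine posSemidef_of_forall_dotProduct_mulVec_nonneg fun x => ?_
  have hxx := posSemidef_vecMulVec_self_star x
  rw [sub_mulVec, one_mulVec, dotProduct_sub, dotProduct_traceDual_mulVec, sub_nonneg,
    dotProduct_comm, ← trace_vecMulVec]
  have hΦY := (hΦ _ hxx).trace_mul_nonneg hY
  rw [mul_sub, mul_one, trace_sub, sub_nonneg] at hΦY
  exact hΦY.trans (hΦtr _ hxx)

end PositiveMap

end Matrix

/-- If `A, B ≥ 0` and `Φ` is a trace non-increasing positive linear map with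
`Tr Φ(A) = Tr A`, then `Tr (Φ(B) Φ(A)⁰) ≥ Tr (B A⁰)` and
`Tr (Φ(B) (I − Φ(A)⁰)) ≤ Tr (B (I − A⁰))`, where `A⁰` and `Φ(A)⁰` denote the support
projections of `A` and `Φ(A)`. -/
theorem renyi_zero_monotonicity {m k : ℕ}
    (Φ : Matrix (Fin m) (Fin m) ℂ →ₗ[ℂ] Matrix (Fin k) (Fin k) ℂ)
    (hΦ : ∀ X : Matrix (Fin m) (Fin m) ℂ, X.PosSemidef → (Φ X).PosSemidef)
    (hΦtr : ∀ X : Matrix (Fin m) (Fin m) ℂ, X.PosSemidef → (Φ X).trace ≤ X.trace)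
    (A B : Matrix (Fin m) (Fin m) ℂ) (hA : A.PosSemidef) (hB : B.PosSemidef)
    (htrA : (Φ A).trace = A.trace)
    (P : Matrix (Fin m) (Fin m) ℂ) (hP : IsSupportProjection A P)
    (Q : Matrix (Fin k) (Fin k) ℂ) (hQ : IsSupportProjection (Φ A) Q) :
    (B * P).trace ≤ (Φ B * Q).trace ∧
      (Φ B * (1 - Q)).trace ≤ (B * (1 - P)).trace := by
  obtain ⟨hPh, hPP, hPA⟩ := hP
  obtain ⟨hQh, hQQ, hQA⟩ := hQ
  have hQproj : IsStarProjection Q := ⟨hQQ, hQh⟩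
  set R := traceDual Φ Q
  have hR : R.PosSemidef := posSemidef_traceDual Φ hΦ hQproj.nonneg.posSemidef
  have hR1 : (1 - R).PosSemidef :=
    posSemidef_one_sub_traceDual Φ hΦ hΦtr hQproj.one_sub_nonneg.posSemidef
  have hQΦA : Q * Φ A = Φ A := mul_eq_self_of_range_le hQQ hQA.ge
  have htr : ((1 - R) * A).trace = 0 := by
    rw [sub_mul, one_mul, trace_sub, trace_mul_comm, trace_mul_traceDual, trace_mul_comm, hQΦA,
      htrA, sub_self]
  have hRP : R * P = P := by
    have := mul_eq_zero_of_range_le (hR1.mul_eq_zero_of_trace_mul_eq_zero_s7 hA htr) hPA.le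
    rwa [sub_mul, one_mul, sub_eq_zero, eq_comm] at this
  have hPR : P ≤ R := IsStarProjection.le_of_nonneg_of_mul_eq_right ⟨hPP, hPh⟩ hR.nonneg hRP
  have key : (B * P).trace ≤ (Φ B * Q).trace :=
    trace_mul_traceDual Φ B Q ▸ hB.trace_mul_le_trace_mul hPR
  refine ⟨key, ?_⟩
  rw [mul_sub, mul_sub, mul_one, mul_one, trace_sub, trace_sub]
  exact sub_le_sub (hΦtr B hB) key
end

section
/- Let A, B be positive semidefinite operators on a finite-dimensional Hilbert space and Φ a positive linear map between matrix algebras. Then Φ(B⁰AB⁰)·Φ(B)⁻¹·Φ(B⁰AB⁰) ≤ Φ(B⁰AB⁻¹AB⁰), where inverses are generalized (Moore–Penrose) inverses. -/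
open Matrix ComplexOrder

/-- `X` is the Moore–Penrose (generalized) inverse of `M`. -/
def IsMoorePenroseInverse {k : ℕ} (M X : Matrix (Fin k) (Fin k) ℂ) : Prop :=
  M * X * M = M ∧ X * M * X = X ∧ (M * X)ᴴ = M * X ∧ (X * M)ᴴ = X * M

/-!
Let `T = (B⁻¹)^{1/2}` and diagonalise `T A T = U D U*`. With `v i` the columns of `B T U` and
`d i` the eigenvalues, `B = ∑ v vᴴ`, `B⁰AB⁰ = ∑ d v vᴴ` and `B⁰AB⁻¹AB⁰ = ∑ d² v vᴴ`. Hence with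
`E i = Φ(v vᴴ) ≥ 0` and `C = Φ(B⁰AB⁰)`, the claimed difference is
`∑ (X + d i)ᴴ E i (X + d i) ≥ 0` for `X = -Φ(B)⁻¹ C`.
-/

section

variable {𝕜 : Type*} [RCLike 𝕜] {m n : Type*} [Fintype n] [DecidableEq n]

theorem Matrix.mul_eq_right_of_range_le {P Q : Matrix n n 𝕜} (hQ : IsIdempotentElem Q)
    (h : LinearMap.range P.mulVecLin ≤ LinearMap.range Q.mulVecLin) : Q * P = P := by
  refine Matrix.toLin'.injective (LinearMap.ext fun v => ?_)
  obtain ⟨u, hu⟩ := h ⟨v, rfl⟩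
  simp only [mulVecLin_apply] at hu
  simp only [toLin'_apply, ← mulVec_mulVec, ← hu]
  rw [mulVec_mulVec, hQ.eq]

theorem Matrix.mul_diagonal_mul_conjTranspose_eq_sum (V : Matrix m n 𝕜) (d : n → 𝕜) :
    V * diagonal d * Vᴴ = ∑ i, d i • vecMulVec (V.col i) (star (V.col i)) := by
  ext a b
  rw [mul_apply]
  simp only [mul_diagonal, conjTranspose_apply, sum_apply, smul_apply,
    vecMulVec_apply, col_apply, Pi.star_apply, smul_eq_mul]
  exact Finset.sum_congr rfl fun i _ => by ring

theorem Matrix.IsHermitian.exists_sum_vecMulVec_pow (R : Matrix m n 𝕜) {W : Matrix n n 𝕜}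
    (hW : W.IsHermitian) : ∃ (v : n → m → 𝕜) (d : n → ℝ), ∀ j : ℕ,
      R * W ^ j * Rᴴ = ∑ i, d i ^ j • vecMulVec (v i) (star (v i)) := by
  set U : Matrix n n 𝕜 := ↑hW.eigenvectorUnitary
  refine ⟨(R * U).col, hW.eigenvalues, fun j => ?_⟩
  have hWj : W ^ j = U * diagonal (fun i => (hW.eigenvalues i ^ j : 𝕜)) * star U := by
    conv_lhs => rw [hW.spectral_theorem]
    rw [← map_pow, Unitary.conjStarAlgAut_apply, diagonal_pow]
    rfl
  rw [hWj, star_eq_conjTranspose,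
    show ∀ D, R * (U * D * Uᴴ) * Rᴴ = R * U * D * (R * U)ᴴ from
      fun D => by simp only [conjTranspose_mul, Matrix.mul_assoc],
    mul_diagonal_mul_conjTranspose_eq_sum]
  simp only [RCLike.real_smul_eq_coe_smul (K := 𝕜), RCLike.ofReal_pow]

theorem Matrix.posSemidef_sum_sq_smul_sub {ι : Type*} [Fintype ι] (E : ι → Matrix n n 𝕜)
    (hE : ∀ i, (E i).PosSemidef) (d : ι → ℝ) {Y : Matrix n n 𝕜} (hY : Y.IsHermitian)
    (hYE : Y * (∑ i, E i) * Y = Y) :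
    (∑ i, d i ^ 2 • E i - (∑ i, d i • E i) * Y * (∑ i, d i • E i)).PosSemidef := by
  set C := ∑ i, d i • E i
  -- the scalar inequality `∑ (x + d i)² e i ≥ 0`, minimised at `x = -(∑ d e)/(∑ e)`, made matricial
  have hC : Cᴴ = C := by
    simp only [C, conjTranspose_sum, conjTranspose_smul, star_trivial, (hE _).isHermitian.eq]
  set X := -(Y * C)
  have hX : Xᴴ = -(C * Y) := by rw [conjTranspose_neg, conjTranspose_mul, hC, hY.eq]
  have hCYC : C * Y * (∑ i, E i) * (Y * C) = C * Y * C := by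
    calc C * Y * (∑ i, E i) * (Y * C) = C * (Y * (∑ i, E i) * Y) * C := by simp only [mul_assoc]
      _ = C * Y * C := by rw [hYE, mul_assoc]
  have key : ∑ i, d i ^ 2 • E i - C * Y * C
      = Xᴴ * (∑ i, E i) * X + Xᴴ * C + C * X + ∑ i, d i ^ 2 • E i := by
    simp only [hX, X, neg_mul, mul_neg, neg_neg]
    rw [hCYC, mul_assoc C Y C]
    abel
  rw [key, Finset.mul_sum, Finset.sum_mul, Finset.mul_sum, Finset.sum_mul,
    ← Finset.sum_add_distrib, ← Finset.sum_add_distrib, ← Finset.sum_add_distrib]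
  refine posSemidef_sum _ fun i _ => ?_
  convert (hE i).conjTranspose_mul_mul_same (X + d i • 1) using 1
  simp only [conjTranspose_add, conjTranspose_smul, conjTranspose_one, star_trivial, add_mul,
    mul_add, smul_mul_assoc, mul_smul_comm, mul_one, one_mul]
  module

end

namespace IsSupportProjection

variable {k : ℕ} {M P Q : Matrix (Fin k) (Fin k) ℂ}

theorem unique (hP : IsSupportProjection M P) (hQ : IsSupportProjection M Q) : P = Q := by
  obtain ⟨hPH, hPP, hPM⟩ := hP
  obtain ⟨hQH, hQQ, hQM⟩ := hQ
  have hQP : Q * P = P := mul_eq_right_of_range_le hQQ (hPM.trans hQM.symm).le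
  have hPQ : P * Q = Q := mul_eq_right_of_range_le hPP (hPM.trans hQM.symm).ge
  calc P = (Q * P)ᴴ := by rw [hQP, hPH.eq]
    _ = Q := by rw [conjTranspose_mul, hPH.eq, hQH.eq, hPQ]

end IsSupportProjection

namespace IsMoorePenroseInverse

variable {k : ℕ} {M X Y : Matrix (Fin k) (Fin k) ℂ}

theorem unique (hX : IsMoorePenroseInverse M X) (hY : IsMoorePenroseInverse M Y) : X = Y := by
  obtain ⟨hX1, hX2, hX3, hX4⟩ := hX
  obtain ⟨hY1, hY2, hY3, hY4⟩ := hY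
  have hMX : M * X = M * Y := by
    calc M * X = (M * Y * M * X)ᴴ := by rw [hY1, hX3]
      _ = (M * X)ᴴ * (M * Y)ᴴ := by rw [mul_assoc (M * Y), conjTranspose_mul]
      _ = M * Y := by rw [hX3, hY3, ← mul_assoc, hX1]
  have hXM : X * M = Y * M := by
    calc X * M = (X * (M * Y * M))ᴴ := by rw [hY1, hX4]
      _ = (Y * M)ᴴ * (X * M)ᴴ := by rw [mul_assoc M, ← mul_assoc X, conjTranspose_mul]
      _ = Y * M := by rw [hX4, hY4, mul_assoc, ← mul_assoc M, hX1]
  calc X = X * M * X := hX2.symm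
    _ = Y * M * Y := by rw [hXM, mul_assoc, hMX, ← mul_assoc]
    _ = Y := hY2

theorem conjTranspose (hX : IsMoorePenroseInverse M X) : IsMoorePenroseInverse Mᴴ Xᴴ := by
  obtain ⟨h1, h2, h3, h4⟩ := hX
  refine ⟨?_, ?_, ?_, ?_⟩
  · rw [← conjTranspose_mul, ← conjTranspose_mul, ← mul_assoc, h1]
  · rw [← conjTranspose_mul, ← conjTranspose_mul, ← mul_assoc, h2]
  · rw [← conjTranspose_mul, conjTranspose_conjTranspose, h4]
  · rw [← conjTranspose_mul, conjTranspose_conjTranspose, h3]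

theorem isHermitian (hM : M.IsHermitian) (hX : IsMoorePenroseInverse M X) : X.IsHermitian :=
  unique (hM.eq ▸ hX.conjTranspose) hX

theorem mul_comm (hM : M.IsHermitian) (hX : IsMoorePenroseInverse M X) : M * X = X * M := by
  rw [← hX.2.2.1, conjTranspose_mul, hM.eq, (hX.isHermitian hM).eq]

theorem posSemidef (hM : M.PosSemidef) (hX : IsMoorePenroseInverse M X) : X.PosSemidef := by
  simpa only [(hX.isHermitian hM.isHermitian).eq, hX.2.1] using hM.conjTranspose_mul_mul_same X

theorem isSupportProjection_mul (hX : IsMoorePenroseInverse M X) :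
    IsSupportProjection M (M * X) := by
  refine ⟨hX.2.2.1, by rw [← mul_assoc, hX.1], le_antisymm ?_ ?_⟩
  · rw [mulVecLin_mul]
    exact LinearMap.range_comp_le_range _ _
  · conv_lhs => rw [← hX.1]
    rw [mulVecLin_mul]
    exact LinearMap.range_comp_le_range _ _

open scoped MatrixOrder in
theorem exists_sum_vecMulVec_pow {A : Matrix (Fin k) (Fin k) ℂ} (hA : A.IsHermitian)
    (hM : M.PosSemidef) (hX : IsMoorePenroseInverse M X) :
    ∃ (v : Fin k → Fin k → ℂ) (d : Fin k → ℝ), ∀ j : ℕ,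
      M * (X * A) ^ j * X * M = ∑ i, d i ^ j • vecMulVec (v i) (star (v i)) := by
  -- `T = X^{1/2}` gives `M (X A)^j X M = (M T) (T A T)^j (M T)ᴴ`
  set T := CFC.sqrt X
  have hTT : T * T = X := CFC.sqrt_mul_sqrt_self X (hX.posSemidef hM).nonneg
  have hT : T.IsHermitian := (CFC.sqrt_nonneg X).posSemidef.isHermitian
  have hW : (T * A * T).IsHermitian := by
    simpa only [hT.eq] using isHermitian_conjTranspose_mul_mul T hA
  obtain ⟨v, d, hvd⟩ := hW.exists_sum_vecMulVec_pow (M * T)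
  refine ⟨v, d, fun j => ?_⟩
  have hsemiconj : T * (T * A * T) ^ j = (X * A) ^ j * T := by
    refine (SemiconjBy.pow_right ?_ j).eq
    simp only [SemiconjBy, ← hTT, mul_assoc]
  rw [← hvd, conjTranspose_mul, hT.eq, hM.isHermitian.eq, mul_assoc M T, hsemiconj]
  simp only [mul_assoc]
  rw [← mul_assoc T T M, hTT]

end IsMoorePenroseInverse

/-- **A Kadison-type inequality.** For positive semidefinite `A, B` and a positive
linear map `Φ`, one has `Φ(B⁰AB⁰) Φ(B)⁻¹ Φ(B⁰AB⁰) ≤ Φ(B⁰AB⁻¹AB⁰)`, where `B⁰` is the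
support projection of `B` and the inverses are generalized (Moore–Penrose) inverses. -/
theorem kadison_type_inequality {m k : ℕ}
    (Φ : Matrix (Fin m) (Fin m) ℂ →ₗ[ℂ] Matrix (Fin k) (Fin k) ℂ)
    (hΦ : ∀ X : Matrix (Fin m) (Fin m) ℂ, X.PosSemidef → (Φ X).PosSemidef)
    (A B : Matrix (Fin m) (Fin m) ℂ) (hA : A.PosSemidef) (hB : B.PosSemidef)
    (P : Matrix (Fin m) (Fin m) ℂ) (hP : IsSupportProjection B P)
    (Binv : Matrix (Fin m) (Fin m) ℂ) (hBinv : IsMoorePenroseInverse B Binv)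
    (Cinv : Matrix (Fin k) (Fin k) ℂ) (hCinv : IsMoorePenroseInverse (Φ B) Cinv) :
    (Φ (P * A * Binv * A * P) - Φ (P * A * P) * Cinv * Φ (P * A * P)).PosSemidef := by
  obtain rfl : P = B * Binv := hP.unique hBinv.isSupportProjection_mul
  obtain ⟨v, d, hvd⟩ := hBinv.exists_sum_vecMulVec_pow hA.isHermitian hB
  set E : Fin m → Matrix (Fin k) (Fin k) ℂ := fun i => Φ (vecMulVec (v i) (star (v i)))
  have hΦ_pow (j : ℕ) : Φ (B * (Binv * A) ^ j * Binv * B) = ∑ i, d i ^ j • E i := by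
    simp only [hvd, map_sum, LinearMap.map_smul_of_tower, E]
  have h0 : Φ B = ∑ i, E i := by simpa only [pow_zero, mul_one, hBinv.1, one_smul] using hΦ_pow 0
  have hcomm := hBinv.mul_comm hB.isHermitian
  have hPAP : B * Binv * A * (B * Binv) = B * (Binv * A) ^ 1 * Binv * B := by
    nth_rw 2 [hcomm]
    simp only [pow_one, mul_assoc]
  have hPABAP : B * Binv * A * Binv * A * (B * Binv) = B * (Binv * A) ^ 2 * Binv * B := by
    nth_rw 2 [hcomm]
    simp only [pow_two, mul_assoc]
  rw [hPAP, hPABAP, hΦ_pow, hΦ_pow]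
  simp only [pow_one]
  exact posSemidef_sum_sq_smul_sub E (fun i => hΦ _ (posSemidef_vecMulVec_self_star _)) d
    (hCinv.isHermitian (hΦ B hB).isHermitian) (h0 ▸ hCinv.2.1)
end

section
/- Let Φ : A₁ → A₂ be a Schwarz map between finite-dimensional C*-algebras, i.e., Φ(X)*Φ(X) ≤ c·Φ(X*X) for all X and some finite c ≥ 0. Then the Hilbert–Schmidt adjoint Φ* is also a Schwarz map, with ‖Φ*‖_S ≤ d₁·d₂·‖Φ‖_S, where dᵢ are the dimensions of the underlying Hilbert spaces. -/
open Matrix ComplexOrder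

/-!
For a vector `v` put `w = Ψ(Y) v` and test the Schwarz inequality of `Φ` on the rank-one matrix
`X = w v*`: it says `Φ(X)* Φ(X) ≤ ‖w‖² P` with `P = c Φ(v v*) ≥ 0`. Pairing `Φ(X)` with `Y`
through the adjunction gives `Tr(Φ(X)* Y) = ‖w‖²` and `Tr(P Y* Y) = c ⟨v, Ψ(Y* Y) v⟩`.
The trace inequality `|Tr(A* Y)|² ≤ n Tr(P Y* Y)` whenever `A* A ≤ P` (Cauchy–Schwarz column by
column in an eigenbasis of `P`, then over the `n` columns) turns this into
`‖Ψ(Y) v‖² ≤ d₂ c ⟨v, Ψ(Y* Y) v⟩`. So `Ψ` is a Schwarz map with constant `d₂ c`, hence also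
with `d₁ d₂ c`, since a Schwarz map `Ψ` with constant `c'` has `c' Ψ(Y* Y) ≥ 0`. Over `ℂ` a
nonnegative quadratic form already forces hermiticity, so no separate argument is needed for
`Ψ(Y* Y)` being Hermitian.
-/

namespace Matrix

section VecMulVec

variable {R m n : Type*} [CommSemiring R] [StarRing R] [Fintype m]

theorem trace_conjTranspose_vecMulVec_mul [Fintype n] (w : m → R) (v : n → R)
    (M : Matrix m n R) :
    ((vecMulVec w (star v))ᴴ * M).trace = star w ⬝ᵥ (M *ᵥ v) := by
  rw [conjTranspose_vecMulVec, star_star, vecMulVec_mul, trace_vecMulVec, dotProduct_comm,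
    dotProduct_mulVec]

theorem conjTranspose_vecMulVec_mul_self (w : m → R) (v : n → R) :
    (vecMulVec w (star v))ᴴ * vecMulVec w (star v) = (star w ⬝ᵥ w) • vecMulVec v (star v) := by
  rw [conjTranspose_vecMulVec, star_star, vecMulVec_mul_vecMulVec, vecMulVec_smul]

end VecMulVec

variable {𝕜 m n : Type*} [RCLike 𝕜] [Fintype m] [Fintype n]

theorem PosSemidef.of_complex_dotProduct_mulVec_nonneg {M : Matrix n n ℂ}
    (h : ∀ x, 0 ≤ star x ⬝ᵥ (M *ᵥ x)) : M.PosSemidef := by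
  classical
  rw [← isPositive_toEuclideanLin_iff, LinearMap.isPositive_iff_complex]
  intro x
  have hx := star_nonneg_iff.2 (h (WithLp.ofLp x))
  rw [star_dotProduct, star_star] at hx
  rw [EuclideanSpace.inner_eq_star_dotProduct, ofLp_toLpLin, dotProduct_comm]
  exact ⟨(Complex.eq_re_of_ofReal_le hx).symm, (Complex.nonneg_iff.1 hx).1⟩

theorem norm_trace_conjTranspose_mul_sq_le_of_diagonal [DecidableEq n] {A Y : Matrix m n 𝕜}
    {d : n → ℝ}
    (h : (diagonal (RCLike.ofReal ∘ d) - Aᴴ * A).PosSemidef) :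
    ‖(Aᴴ * Y).trace‖ ^ 2 ≤
      Fintype.card n * RCLike.re (diagonal (RCLike.ofReal ∘ d) * (Yᴴ * Y)).trace := by
  let a : n → EuclideanSpace 𝕜 m := fun k => WithLp.toLp 2 (Aᵀ k)
  let y : n → EuclideanSpace 𝕜 m := fun k => WithLp.toLp 2 (Yᵀ k)
  have ha : ∀ k, ‖a k‖ ^ 2 ≤ d k := fun k => by
    have := RCLike.nonneg_iff.1 (h.diag_nonneg (i := k))
    simpa [a, ← inner_matrix_col_col, ← inner_self_eq_norm_sq] using this.1
  have htrace : (Aᴴ * Y).trace = ∑ k, inner 𝕜 (a k) (y k) := by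
    simp [a, y, trace, inner_matrix_col_col]
  have hdiag :
      RCLike.re (diagonal (RCLike.ofReal ∘ d) * (Yᴴ * Y)).trace = ∑ k, d k * ‖y k‖ ^ 2 := by
    simp [y, trace, ← inner_matrix_col_col]
  rw [htrace, hdiag]
  calc ‖∑ k, inner 𝕜 (a k) (y k)‖ ^ 2 ≤ (∑ k, ‖a k‖ * ‖y k‖) ^ 2 := by
        gcongr
        exact (norm_sum_le _ _).trans (Finset.sum_le_sum fun k _ => norm_inner_le_norm _ _)
    _ ≤ Fintype.card n * ∑ k, (‖a k‖ * ‖y k‖) ^ 2 := sq_sum_le_card_mul_sum_sq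
    _ ≤ Fintype.card n * ∑ k, d k * ‖y k‖ ^ 2 := by
        gcongr with k
        rw [mul_pow]
        exact mul_le_mul_of_nonneg_right (ha k) (by positivity)

theorem norm_trace_conjTranspose_mul_sq_le {A Y : Matrix m n 𝕜} {P : Matrix n n 𝕜}
    (h : (P - Aᴴ * A).PosSemidef) :
    ‖(Aᴴ * Y).trace‖ ^ 2 ≤ Fintype.card n * RCLike.re (P * (Yᴴ * Y)).trace := by
  classical
  have hP : P.IsHermitian := by
    simpa using (h.add (posSemidef_conjTranspose_mul_self A)).isHermitian
  let U : Matrix n n 𝕜 := hP.eigenvectorUnitary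
  let D : Matrix n n 𝕜 := diagonal (RCLike.ofReal ∘ hP.eigenvalues)
  have hUD : Uᴴ * P * U = D := by
    have := hP.conjStarAlgAut_star_eigenvectorUnitary
    rwa [Unitary.conjStarAlgAut_apply, Unitary.coe_star, star_star, star_eq_conjTranspose] at this
  have hUU : ∀ M : Matrix n n 𝕜, U * (Uᴴ * M) = M := fun M => by
    rw [← Matrix.mul_assoc, ← star_eq_conjTranspose, Unitary.mul_star_self_of_mem (by simp [U]),
      Matrix.one_mul]
  have htrace : ∀ M, (Uᴴ * M * U).trace = M.trace := fun M => by
    rw [trace_mul_cycle, Matrix.mul_assoc, hUU]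
  have hD : (D - (A * U)ᴴ * (A * U)).PosSemidef := by
    simpa [← hUD, conjTranspose_mul, Matrix.mul_sub, Matrix.sub_mul, Matrix.mul_assoc] using
      h.conjTranspose_mul_mul_same U
  have hAY : (Aᴴ * Y).trace = ((A * U)ᴴ * (Y * U)).trace := by
    rw [← htrace]
    simp only [conjTranspose_mul, Matrix.mul_assoc]
  have hPY : (P * (Yᴴ * Y)).trace = (D * ((Y * U)ᴴ * (Y * U))).trace := by
    rw [← htrace, ← hUD]
    simp only [conjTranspose_mul, Matrix.mul_assoc, hUU]
  rw [hAY, hPY]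
  exact norm_trace_conjTranspose_mul_sq_le_of_diagonal hD

end Matrix

section SchwarzMap

variable {m n : Type*} [Fintype m] [Fintype n]

def IsSchwarzMapWith (c : ℝ) (Φ : Matrix n n ℂ →ₗ[ℂ] Matrix m m ℂ) : Prop :=
  ∀ X, (c • Φ (Xᴴ * X) - (Φ X)ᴴ * Φ X).PosSemidef

namespace IsSchwarzMapWith

variable {c : ℝ} {Φ : Matrix n n ℂ →ₗ[ℂ] Matrix m m ℂ}

open scoped MatrixOrder in
theorem smul_map_posSemidef (hΦ : IsSchwarzMapWith c Φ) {M : Matrix n n ℂ} (hM : M.PosSemidef) :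
    (c • Φ M).PosSemidef := by
  classical
  obtain ⟨B, rfl⟩ := CStarAlgebra.nonneg_iff_eq_star_mul_self.mp hM.nonneg
  rw [star_eq_conjTranspose]
  simpa using (hΦ B).add (posSemidef_conjTranspose_mul_self (Φ B))

theorem mul_left (hΦ : IsSchwarzMapWith c Φ) {k : ℝ} (hk : 1 ≤ k) :
    IsSchwarzMapWith (k * c) Φ := fun X => by
  have := (hΦ X).add ((hΦ.smul_map_posSemidef (posSemidef_conjTranspose_mul_self X)).smul
    (sub_nonneg.2 hk))
  convert this using 1
  module

theorem posSemidef_vecMulVec (hΦ : IsSchwarzMapWith c Φ) (w v : n → ℂ) :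
    ((star w ⬝ᵥ w).re • (c • Φ (vecMulVec v (star v))) -
      (Φ (vecMulVec w (star v)))ᴴ * Φ (vecMulVec w (star v))).PosSemidef := by
  have := hΦ (vecMulVec w (star v))
  rwa [conjTranspose_vecMulVec_mul_self, map_smul, Complex.eq_re_of_ofReal_le
    (dotProduct_star_self_nonneg w), Complex.coe_smul, smul_comm] at this

theorem trace_smul_map_vecMulVec_mul (hΦ : IsSchwarzMapWith c Φ)
    {Ψ : Matrix m m ℂ →ₗ[ℂ] Matrix n n ℂ}
    (hadj : ∀ X Y, ((Φ X)ᴴ * Y).trace = (Xᴴ * Ψ Y).trace) (v : n → ℂ) (M : Matrix m m ℂ) :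
    (c • Φ (vecMulVec v (star v)) * M).trace = c * (star v ⬝ᵥ (Ψ M *ᵥ v)) := by
  rw [← (hΦ.smul_map_posSemidef (posSemidef_vecMulVec_self_star v)).isHermitian.eq]
  simp only [conjTranspose_smul, star_trivial, smul_mul, trace_smul, hadj,
    trace_conjTranspose_vecMulVec_mul, Complex.real_smul]

theorem adjoint (hΦ : IsSchwarzMapWith c Φ)
    {Ψ : Matrix m m ℂ →ₗ[ℂ] Matrix n n ℂ}
    (hadj : ∀ X Y, ((Φ X)ᴴ * Y).trace = (Xᴴ * Ψ Y).trace) :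
    IsSchwarzMapWith (Fintype.card m * c) Ψ := fun Y => by
  refine PosSemidef.of_complex_dotProduct_mulVec_nonneg fun v => ?_
  let w := Ψ Y *ᵥ v
  let P := c • Φ (vecMulVec v (star v))
  have hw : 0 ≤ star w ⬝ᵥ w := dotProduct_star_self_nonneg w
  have hPY : 0 ≤ (P * (Yᴴ * Y)).trace := by
    have := ((hΦ.smul_map_posSemidef (posSemidef_vecMulVec_self_star v)).mul_mul_conjTranspose_same
      Y).trace_nonneg
    rwa [Matrix.mul_assoc, trace_mul_comm, Matrix.mul_assoc] at this
  have hsq : (star w ⬝ᵥ w).re ^ 2 ≤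
      Fintype.card m * ((star w ⬝ᵥ w).re * (P * (Yᴴ * Y)).trace.re) := by
    have := norm_trace_conjTranspose_mul_sq_le (hΦ.posSemidef_vecMulVec w v) (Y := Y)
    rwa [hadj, trace_conjTranspose_vecMulVec_mul, ← Complex.re_eq_norm.2 hw, smul_mul, trace_smul,
      Complex.real_smul, RCLike.re_to_complex, Complex.re_ofReal_mul] at this
  have hquad : star v ⬝ᵥ ((((Fintype.card m : ℝ) * c) • Ψ (Yᴴ * Y) - (Ψ Y)ᴴ * Ψ Y) *ᵥ v) =
      Fintype.card m * (P * (Yᴴ * Y)).trace - star w ⬝ᵥ w := by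
    have hΨY : star v ⬝ᵥ (((Ψ Y)ᴴ * Ψ Y) *ᵥ v) = star w ⬝ᵥ w := by
      rw [← mulVec_mulVec, dotProduct_mulVec, vecMul_conjTranspose, star_star]
    rw [sub_mulVec, dotProduct_sub, smul_mulVec, dotProduct_smul, hΨY,
      hΦ.trace_smul_map_vecMulVec_mul hadj, Complex.real_smul]
    push_cast
    ring
  rw [hquad, Complex.eq_re_of_ofReal_le hw, Complex.eq_re_of_ofReal_le hPY]
  norm_cast
  have hPY0 : 0 ≤ Fintype.card m * (P * (Yᴴ * Y)).trace.re :=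
    mul_nonneg (Nat.cast_nonneg _) (Complex.nonneg_iff.1 hPY).1
  nlinarith [(Complex.nonneg_iff.1 hw).1]

end IsSchwarzMapWith

end SchwarzMap

theorem adjoint_schwarz_map_general {d₁ d₂ : ℕ}
    (Φ : Matrix (Fin d₁) (Fin d₁) ℂ →ₗ[ℂ] Matrix (Fin d₂) (Fin d₂) ℂ)
    (Ψ : Matrix (Fin d₂) (Fin d₂) ℂ →ₗ[ℂ] Matrix (Fin d₁) (Fin d₁) ℂ)
    (hadj : ∀ (X : Matrix (Fin d₁) (Fin d₁) ℂ) (Y : Matrix (Fin d₂) (Fin d₂) ℂ),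
      ((Φ X)ᴴ * Y).trace = (Xᴴ * Ψ Y).trace)
    (c : ℝ)
    (hΦ : ∀ X : Matrix (Fin d₁) (Fin d₁) ℂ, (c • Φ (Xᴴ * X) - (Φ X)ᴴ * Φ X).PosSemidef) :
    ∀ Y : Matrix (Fin d₂) (Fin d₂) ℂ,
      (((d₁ : ℝ) * d₂ * c) • Ψ (Yᴴ * Y) - (Ψ Y)ᴴ * Ψ Y).PosSemidef := by
  intro Y
  rcases Nat.eq_zero_or_pos d₁ with rfl | hd₁
  · convert PosSemidef.zero
    exact Subsingleton.elim _ _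
  · have hΨ := (IsSchwarzMapWith.adjoint hΦ hadj).mul_left (k := d₁) (by exact_mod_cast hd₁)
    simpa [mul_assoc] using hΨ Y

/-- **The Hilbert–Schmidt adjoint of a Schwarz map is a Schwarz map.** If
`Φ : B(H₁) → B(H₂)` satisfies `Φ(X)* Φ(X) ≤ c · Φ(X* X)` for all `X` (with `c ≥ 0`), then
its Hilbert–Schmidt adjoint `Ψ = Φ*` satisfies
`Ψ(Y)* Ψ(Y) ≤ d₁ d₂ c · Ψ(Y* Y)` for all `Y`, where `dᵢ = dim Hᵢ`.
In particular `‖Φ*‖_S ≤ d₁ d₂ ‖Φ‖_S`. -/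
theorem adjoint_schwarz_map {d₁ d₂ : ℕ}
    (Φ : Matrix (Fin d₁) (Fin d₁) ℂ →ₗ[ℂ] Matrix (Fin d₂) (Fin d₂) ℂ)
    (Ψ : Matrix (Fin d₂) (Fin d₂) ℂ →ₗ[ℂ] Matrix (Fin d₁) (Fin d₁) ℂ)
    (hadj : ∀ (X : Matrix (Fin d₁) (Fin d₁) ℂ) (Y : Matrix (Fin d₂) (Fin d₂) ℂ),
      ((Φ X)ᴴ * Y).trace = (Xᴴ * Ψ Y).trace)
    (c : ℝ) (hc : 0 ≤ c)
    (hΦ : ∀ X : Matrix (Fin d₁) (Fin d₁) ℂ, (c • Φ (Xᴴ * X) - (Φ X)ᴴ * Φ X).PosSemidef) :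
    ∀ Y : Matrix (Fin d₂) (Fin d₂) ℂ,
      (((d₁ : ℝ) * d₂ * c) • Ψ (Yᴴ * Y) - (Ψ Y)ᴴ * Ψ Y).PosSemidef :=
  adjoint_schwarz_map_general Φ Ψ hadj c hΦ
end

section
/- Let Φ : A₁ → A₂ be a Schwarz map with Schwarz constant s = ‖Φ‖_S, and let M_Φ := {X : Φ(X)Φ(X*) = s·Φ(XX*)}. Then X ∈ M_Φ if and only if Φ(X)Φ(Z) = s·Φ(XZ) for all Z ∈ A₁; in particular M_Φ is a vector subspace closed under multiplication. -/
/-!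
Write `D(Y, Z) = s Φ(Y*Z) - Φ(Y)*Φ(Z)`; the Schwarz inequality says `D(X, X) ≥ 0`. Since
`Φ(X)*Φ(X)` is Hermitian, so is `Φ(X*X)`, and every Hermitian matrix is a difference of two
matrices `X*X`; hence `Φ` is *-preserving and `D` is a Hermitian sesquilinear map, positive on the
diagonal. Cauchy–Schwarz for `D` gives `D(Y, Y) = 0 → D(Y, Z) = 0`, which for `Y = X*` is the
characterization of `M_Φ`. Closure under products follows from
`s Φ(XY)Φ(Z) = Φ(X)Φ(Y)Φ(Z) = s² Φ(XYZ)`, since `s = 0` only for `Φ = 0`.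
-/

open Matrix ComplexOrder

theorem LinearMap.map_star_of_isSelfAdjoint {E F : Type*} [AddCommGroup E] [Module ℂ E]
    [StarAddMonoid E] [StarModule ℂ E] [AddCommGroup F] [Module ℂ F] [StarAddMonoid F]
    [StarModule ℂ F] (f : E →ₗ[ℂ] F) (hf : ∀ x, IsSelfAdjoint x → IsSelfAdjoint (f x))
    (x : E) : f (star x) = star (f x) := by
  rw [← realPart_add_I_smul_imaginaryPart x]
  simp [(realPart x).2.star_eq, (imaginaryPart x).2.star_eq, (hf _ (realPart x).2).star_eq,
    (hf _ (imaginaryPart x).2).star_eq]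

theorem Complex.eq_zero_of_forall_two_mul_re_add_normSq_mul_nonneg {b : ℂ} {c : ℝ}
    (h : ∀ t : ℂ, 0 ≤ 2 * (t * b).re + normSq t * c) : b = 0 := by
  set r : ℝ := (|c| + 1)⁻¹
  have hr : 0 < r := by positivity
  have hrc : r * c < 2 := by
    have : r * (|c| + 1) = 1 := inv_mul_cancel₀ (by positivity)
    nlinarith [le_abs_self c]
  have key := h (-r * (starRingEnd ℂ) b)
  have h1 : (-r * (starRingEnd ℂ) b * b).re = -r * normSq b := by
    rw [mul_assoc, ← Complex.normSq_eq_conj_mul_self]; simp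
  simp only [h1, map_mul, Complex.normSq_neg, Complex.normSq_ofReal, Complex.normSq_conj] at key
  refine Complex.normSq_eq_zero.mp (by_contra fun hne => ?_)
  have hpos : 0 < r * normSq b := mul_pos hr ((Complex.normSq_nonneg b).lt_of_ne' hne)
  nlinarith [mul_pos hpos (sub_pos.mpr hrc)]

namespace Matrix

variable {n : Type*} [Fintype n]

theorem dotProduct_conjTranspose_mulVec_self (M : Matrix n n ℂ) (x : n → ℂ) :
    star x ⬝ᵥ (Mᴴ *ᵥ x) = star (star x ⬝ᵥ (M *ᵥ x)) := by
  rw [star_dotProduct, star_mulVec, conjTranspose_conjTranspose, dotProduct_mulVec]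

theorem eq_zero_of_forall_dotProduct_mulVec_self_eq_zero {M : Matrix n n ℂ}
    (h : ∀ x, star x ⬝ᵥ (M *ᵥ x) = 0) : M = 0 := by
  classical
  suffices M.toEuclideanLin = 0 by simpa using congrArg toEuclideanLin.symm this
  refine (inner_map_self_eq_zero _).mp fun x => ?_
  rw [← inner_conj_symm, EuclideanSpace.inner_eq_star_dotProduct, dotProduct_comm]
  simp [h]

theorem eq_zero_of_forall_posSemidef_smul_add_star_smul_conjTranspose_add {B C : Matrix n n ℂ}
    (h : ∀ t : ℂ, (t • B + star t • Bᴴ + (star t * t) • C).PosSemidef) : B = 0 := by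
  refine eq_zero_of_forall_dotProduct_mulVec_self_eq_zero fun x => ?_
  refine Complex.eq_zero_of_forall_two_mul_re_add_normSq_mul_nonneg (c := (star x ⬝ᵥ (C *ᵥ x)).re)
    fun t => ?_
  have hq := (h t).dotProduct_mulVec_nonneg x
  simp only [add_mulVec, smul_mulVec, dotProduct_add, dotProduct_smul, smul_eq_mul,
    dotProduct_conjTranspose_mulVec_self, Complex.star_def, ← Complex.normSq_eq_conj_mul_self] at hq
  have hre := (Complex.le_def.mp hq).1
  simp only [Complex.zero_re, Complex.add_re, Complex.mul_re, Complex.conj_re, Complex.conj_im,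
    Complex.ofReal_re, Complex.ofReal_im] at hre ⊢
  linear_combination hre

theorem IsHermitian.exists_eq_conjTranspose_mul_self_sub {α : Type*} [Field α] [StarRing α]
    [NeZero (2 : α)] {H : Matrix n n α} (hH : H.IsHermitian) :
    ∃ A B : Matrix n n α, H = Aᴴ * A - Bᴴ * B := by
  classical
  refine ⟨(2⁻¹ : α) • (H + 1), (2⁻¹ : α) • (H - 1), ?_⟩
  simp only [conjTranspose_smul, conjTranspose_add, conjTranspose_sub, conjTranspose_one, hH.eq,
    star_inv₀, star_ofNat, smul_mul_smul_comm, ← smul_sub]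
  rw [show (H + 1) * (H + 1) - (H - 1) * (H - 1) = (4 : α) • H by
      rw [ofNat_smul_eq_nsmul (R := α)]; noncomm_ring, smul_smul,
    show (2⁻¹ * 2⁻¹ * 4 : α) = 1 by field_simp; norm_num, one_smul]

end Matrix

section Schwarz

variable {n p : Type*} [Fintype n] [Fintype p]

noncomputable def schwarzForm (Φ : Matrix n n ℂ →ₗ[ℂ] Matrix p p ℂ) (s : ℝ) (Y Z : Matrix n n ℂ) :
    Matrix p p ℂ :=
  s • Φ (Yᴴ * Z) - (Φ Y)ᴴ * Φ Z

def IsSchwarzMap (Φ : Matrix n n ℂ →ₗ[ℂ] Matrix p p ℂ) (s : ℝ) : Prop :=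
  ∀ X, (schwarzForm Φ s X X).PosSemidef

def multiplicativeDomain (Φ : Matrix n n ℂ →ₗ[ℂ] Matrix p p ℂ) (s : ℝ) : Set (Matrix n n ℂ) :=
  {X | Φ X * Φ Xᴴ = s • Φ (X * Xᴴ)}

variable {Φ : Matrix n n ℂ →ₗ[ℂ] Matrix p p ℂ} {s : ℝ}

theorem schwarzForm_add_smul_self (Y Z : Matrix n n ℂ) (t : ℂ) :
    schwarzForm Φ s (Y + t • Z) (Y + t • Z) = schwarzForm Φ s Y Y +
      (t • schwarzForm Φ s Y Z + star t • schwarzForm Φ s Z Y +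
        (star t * t) • schwarzForm Φ s Z Z) := by
  simp only [schwarzForm, conjTranspose_add, conjTranspose_smul, add_mul, mul_add, map_add,
    _root_.map_smul, smul_mul_assoc, mul_smul_comm, RCLike.real_smul_eq_coe_smul (K := ℂ)]
  module

namespace IsSchwarzMap

theorem eq_zero (h : IsSchwarzMap Φ 0) : Φ = 0 := by
  open scoped MatrixOrder in
  refine LinearMap.ext fun X => conjTranspose_mul_self_eq_zero.mp (le_antisymm ?_
    (posSemidef_conjTranspose_mul_self _).nonneg)
  simpa [schwarzForm, Matrix.le_iff] using h X

theorem isHermitian_map_conjTranspose_mul_self (h : IsSchwarzMap Φ s) (X : Matrix n n ℂ) :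
    (Φ (Xᴴ * X)).IsHermitian := by
  rcases eq_or_ne s 0 with rfl | hs
  · simp [h.eq_zero]
  have hsΦ : (s • Φ (Xᴴ * X)).IsHermitian := by
    simpa [schwarzForm] using (h X).isHermitian.add (isHermitian_conjTranspose_mul_self (Φ X))
  simpa [hs] using hsΦ.smul (IsSelfAdjoint.all s⁻¹)

theorem isHermitian_map (h : IsSchwarzMap Φ s) {H : Matrix n n ℂ} (hH : H.IsHermitian) :
    (Φ H).IsHermitian := by
  obtain ⟨A, B, rfl⟩ := hH.exists_eq_conjTranspose_mul_self_sub
  rw [map_sub]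
  exact (h.isHermitian_map_conjTranspose_mul_self A).sub
    (h.isHermitian_map_conjTranspose_mul_self B)

theorem map_conjTranspose (h : IsSchwarzMap Φ s) (A : Matrix n n ℂ) : Φ Aᴴ = (Φ A)ᴴ :=
  Φ.map_star_of_isSelfAdjoint (fun _ hX => h.isHermitian_map hX) A

theorem conjTranspose_schwarzForm (h : IsSchwarzMap Φ s) (Y Z : Matrix n n ℂ) :
    (schwarzForm Φ s Y Z)ᴴ = schwarzForm Φ s Z Y := by
  simp [schwarzForm, ← h.map_conjTranspose]

theorem schwarzForm_eq_zero (h : IsSchwarzMap Φ s) {Y : Matrix n n ℂ}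
    (hY : schwarzForm Φ s Y Y = 0) (Z : Matrix n n ℂ) : schwarzForm Φ s Y Z = 0 :=
  eq_zero_of_forall_posSemidef_smul_add_star_smul_conjTranspose_add fun t => by
    simpa [schwarzForm_add_smul_self, hY, h.conjTranspose_schwarzForm] using h (Y + t • Z)

theorem mem_multiplicativeDomain_iff (h : IsSchwarzMap Φ s) {X : Matrix n n ℂ} :
    X ∈ multiplicativeDomain Φ s ↔ ∀ Z, Φ X * Φ Z = s • Φ (X * Z) := by
  have hform : ∀ Z, schwarzForm Φ s Xᴴ Z = s • Φ (X * Z) - Φ X * Φ Z := by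
    simp [schwarzForm, h.map_conjTranspose]
  refine ⟨fun hX Z => ?_, fun hZ => hZ Xᴴ⟩
  have := h.schwarzForm_eq_zero (by rw [hform, ← hX, sub_self]) Z
  rwa [hform, sub_eq_zero, eq_comm] at this

theorem add_mem (h : IsSchwarzMap Φ s) {X Y : Matrix n n ℂ} (hX : X ∈ multiplicativeDomain Φ s)
    (hY : Y ∈ multiplicativeDomain Φ s) : X + Y ∈ multiplicativeDomain Φ s := by
  rw [h.mem_multiplicativeDomain_iff] at hX hY ⊢
  intro Z
  simp only [map_add, add_mul, hX, hY, smul_add]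

theorem smul_mem (h : IsSchwarzMap Φ s) (a : ℂ) {X : Matrix n n ℂ}
    (hX : X ∈ multiplicativeDomain Φ s) : a • X ∈ multiplicativeDomain Φ s := by
  rw [h.mem_multiplicativeDomain_iff] at hX ⊢
  intro Z
  rw [_root_.map_smul, smul_mul_assoc, hX, smul_mul_assoc, _root_.map_smul, smul_comm]

theorem mul_mem (h : IsSchwarzMap Φ s) {X Y : Matrix n n ℂ} (hX : X ∈ multiplicativeDomain Φ s)
    (hY : Y ∈ multiplicativeDomain Φ s) : X * Y ∈ multiplicativeDomain Φ s := by
  rw [h.mem_multiplicativeDomain_iff] at hX hY ⊢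
  intro Z
  rcases eq_or_ne s 0 with rfl | hs
  · simp [h.eq_zero]
  refine smul_right_injective _ hs ?_
  calc s • (Φ (X * Y) * Φ Z) = Φ X * (Φ Y * Φ Z) := by rw [← smul_mul_assoc, ← hX, mul_assoc]
    _ = s • s • Φ (X * Y * Z) := by rw [hY, mul_smul_comm, hX, mul_assoc]

end IsSchwarzMap
end Schwarz

/-- **Multiplicative domain of a Schwarz map.** Let `Φ` be a Schwarz map with (least)
Schwarz constant `s = ‖Φ‖_S`, and let `M_Φ = {X : Φ(X) Φ(X*) = s Φ(X X*)}`. Then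
`X ∈ M_Φ` iff `Φ(X) Φ(Z) = s Φ(X Z)` for all `Z`; in particular `M_Φ` is a vector
subspace closed under multiplication. -/
theorem schwarz_multiplicative_domain {m k : ℕ}
    (Φ : Matrix (Fin m) (Fin m) ℂ →ₗ[ℂ] Matrix (Fin k) (Fin k) ℂ) (s : ℝ)
    (hs : IsLeast {c : ℝ | 0 ≤ c ∧
      ∀ X : Matrix (Fin m) (Fin m) ℂ, (c • Φ (Xᴴ * X) - (Φ X)ᴴ * Φ X).PosSemidef} s) :
    (∀ X : Matrix (Fin m) (Fin m) ℂ,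
      X ∈ {X : Matrix (Fin m) (Fin m) ℂ | Φ X * Φ Xᴴ = s • Φ (X * Xᴴ)} ↔
        ∀ Z : Matrix (Fin m) (Fin m) ℂ, Φ X * Φ Z = s • Φ (X * Z)) ∧
    (∀ X Y : Matrix (Fin m) (Fin m) ℂ, ∀ a : ℂ,
      X ∈ {X : Matrix (Fin m) (Fin m) ℂ | Φ X * Φ Xᴴ = s • Φ (X * Xᴴ)} →
      Y ∈ {X : Matrix (Fin m) (Fin m) ℂ | Φ X * Φ Xᴴ = s • Φ (X * Xᴴ)} →
      X + Y ∈ {X : Matrix (Fin m) (Fin m) ℂ | Φ X * Φ Xᴴ = s • Φ (X * Xᴴ)} ∧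
      a • X ∈ {X : Matrix (Fin m) (Fin m) ℂ | Φ X * Φ Xᴴ = s • Φ (X * Xᴴ)} ∧
      X * Y ∈ {X : Matrix (Fin m) (Fin m) ℂ | Φ X * Φ Xᴴ = s • Φ (X * Xᴴ)}) := by
  have h : IsSchwarzMap Φ s := hs.1.2
  exact ⟨fun X => h.mem_multiplicativeDomain_iff,
    fun X Y a hX hY => ⟨h.add_mem hX hY, h.smul_mem a hX, h.mul_mem hX hY⟩⟩
end

section
/- Let γ : A → A be a unital Schwarz contraction on a finite-dimensional C*-algebra, and suppose there is a faithful (strictly positive) linear functional α with α ∘ γ = α. Then the fixed-point set Fix(γ) = {X : γ(X) = X} is a C*-subalgebra of A, and γ restricted to Fix(γ) acts as a *-algebra homomorphism. -/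
open Matrix ComplexOrder

/-! A fixed point `X` gives a positive semidefinite defect `γ (Xᴴ X) - Xᴴ X` by the Schwarz
inequality, and the invariant faithful functional `Tr (A ·)` vanishes on it, so `Xᴴ X` is fixed as
well. Polarization upgrades this to `Xᴴ Y` for fixed `X`, `Y`; taking `Y = 1` gives closure under
adjoints, and then `X Y = (Xᴴ)ᴴ Y` gives closure under products. -/

open scoped MatrixOrder in
theorem Matrix.PosDef.trace_mul_eq_zero_iff {m 𝕜 : Type*} [Fintype m] [DecidableEq m]
    [RCLike 𝕜] {A D : Matrix m m 𝕜} (hA : A.PosDef) (hD : D.PosSemidef) :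
    (A * D).trace = 0 ↔ D = 0 := by
  refine ⟨fun h => ?_, fun h => by simp [h]⟩
  obtain ⟨y, hy, rfl⟩ := CStarAlgebra.isStrictlyPositive_iff_eq_star_mul_self.mp
    hA.isStrictlyPositive
  have hyD : y * D * yᴴ = 0 := by
    rw [← (hD.mul_mul_conjTranspose_same y).trace_eq_zero_iff, trace_mul_cycle, ← h,
      star_eq_conjTranspose, Matrix.mul_assoc]
  rwa [← star_eq_conjTranspose, hy.star.mul_left_eq_zero, hy.mul_right_eq_zero] at hyD

theorem Matrix.PosDef.eq_of_posSemidef_sub_of_trace_mul_eq {m 𝕜 : Type*} [Fintype m]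
    [DecidableEq m] [RCLike 𝕜] {A B C : Matrix m m 𝕜} (hA : A.PosDef) (hBC : (B - C).PosSemidef)
    (h : (A * B).trace = (A * C).trace) : B = C :=
  sub_eq_zero.mp <| (hA.trace_mul_eq_zero_iff hBC).mp <| by
    rw [Matrix.mul_sub, trace_sub, h, sub_self]

theorem star_mul_eq_polarization {R : Type*} [Ring R] [StarRing R] [Algebra ℂ R]
    [StarModule ℂ R] (x y : R) :
    star x * y = (4 : ℂ)⁻¹ • (star (x + y) * (x + y) - star (x - y) * (x - y)
      - Complex.I • (star (x + Complex.I • y) * (x + Complex.I • y))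
      + Complex.I • (star (x - Complex.I • y) * (x - Complex.I • y))) := by
  simp only [star_add, star_sub, star_smul, Complex.star_def, Complex.conj_I, add_mul, sub_mul,
    mul_add, mul_sub, smul_mul_assoc, mul_smul_comm, smul_smul, smul_add, smul_sub]
  match_scalars <;> ring_nf <;> simp only [Complex.I_sq] <;> ring

theorem Submodule.star_mul_mem_of_forall_star_mul_self_mem {R : Type*} [Ring R] [StarRing R]
    [Algebra ℂ R] [StarModule ℂ R] {S T : Submodule ℂ R} (h : ∀ z ∈ S, star z * z ∈ T)
    {x y : R} (hx : x ∈ S) (hy : y ∈ S) : star x * y ∈ T := by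
  rw [star_mul_eq_polarization]
  exact T.smul_mem _ <| T.add_mem
    (T.sub_mem (T.sub_mem (h _ (S.add_mem hx hy)) (h _ (S.sub_mem hx hy)))
      (T.smul_mem _ (h _ (S.add_mem hx (S.smul_mem _ hy)))))
    (T.smul_mem _ (h _ (S.sub_mem hx (S.smul_mem _ hy))))

section SchwarzMap

variable {m : Type*} [Fintype m] [DecidableEq m]

theorem map_conjTranspose_mul_self_of_schwarz {𝕜 : Type*} [RCLike 𝕜]
    {γ : Matrix m m 𝕜 →ₗ[𝕜] Matrix m m 𝕜}
    (hschwarz : ∀ X, (γ (Xᴴ * X) - (γ X)ᴴ * γ X).PosSemidef) {A : Matrix m m 𝕜}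
    (hA : A.PosDef) (hinv : ∀ X, (A * γ X).trace = (A * X).trace) {X : Matrix m m 𝕜}
    (hX : γ X = X) : γ (Xᴴ * X) = Xᴴ * X :=
  hA.eq_of_posSemidef_sub_of_trace_mul_eq (by simpa only [hX] using hschwarz X) (hinv _)

variable {γ : Matrix m m ℂ →ₗ[ℂ] Matrix m m ℂ}

theorem map_conjTranspose_mul_of_schwarz
    (hschwarz : ∀ X, (γ (Xᴴ * X) - (γ X)ᴴ * γ X).PosSemidef) {A : Matrix m m ℂ}
    (hA : A.PosDef) (hinv : ∀ X, (A * γ X).trace = (A * X).trace) {X Y : Matrix m m ℂ}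
    (hX : γ X = X) (hY : γ Y = Y) : γ (Xᴴ * Y) = Xᴴ * Y :=
  Submodule.star_mul_mem_of_forall_star_mul_self_mem (S := LinearMap.eqLocus γ LinearMap.id)
    (T := LinearMap.eqLocus γ LinearMap.id) (fun _ hZ => map_conjTranspose_mul_self_of_schwarz hschwarz hA hinv hZ) hX hY

theorem map_conjTranspose_of_schwarz (hunital : γ 1 = 1)
    (hschwarz : ∀ X, (γ (Xᴴ * X) - (γ X)ᴴ * γ X).PosSemidef) {A : Matrix m m ℂ}
    (hA : A.PosDef) (hinv : ∀ X, (A * γ X).trace = (A * X).trace) {X : Matrix m m ℂ}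
    (hX : γ X = X) : γ Xᴴ = Xᴴ := by
  simpa only [Matrix.mul_one] using map_conjTranspose_mul_of_schwarz hschwarz hA hinv hX hunital

theorem map_mul_of_schwarz (hunital : γ 1 = 1)
    (hschwarz : ∀ X, (γ (Xᴴ * X) - (γ X)ᴴ * γ X).PosSemidef) {A : Matrix m m ℂ}
    (hA : A.PosDef) (hinv : ∀ X, (A * γ X).trace = (A * X).trace) {X Y : Matrix m m ℂ}
    (hX : γ X = X) (hY : γ Y = Y) : γ (X * Y) = X * Y := by
  simpa only [conjTranspose_conjTranspose] using map_conjTranspose_mul_of_schwarz hschwarz hA hinv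
    (map_conjTranspose_of_schwarz hunital hschwarz hA hinv hX) hY

end SchwarzMap

/-- **Fixed points of a Schwarz contraction with a faithful invariant functional.** If
`γ` is a unital Schwarz contraction on a matrix algebra and there is a faithful positive
linear functional `α(X) = Tr(A X)` (with `A` positive definite) satisfying `α ∘ γ = α`,
then the fixed-point set `Fix(γ)` is a C*-subalgebra (it contains the unit and is closed
under addition, scalar multiplication, adjoints and products), and `γ` acts on it as a
*-algebra homomorphism. -/
theorem fixed_points_csubalgebra {n : ℕ}
    (γ : Matrix (Fin n) (Fin n) ℂ →ₗ[ℂ] Matrix (Fin n) (Fin n) ℂ)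
    (hunital : γ 1 = 1)
    (hschwarz : ∀ X : Matrix (Fin n) (Fin n) ℂ, (γ (Xᴴ * X) - (γ X)ᴴ * γ X).PosSemidef)
    (A : Matrix (Fin n) (Fin n) ℂ) (hA : A.PosDef)
    (hinv : ∀ X : Matrix (Fin n) (Fin n) ℂ, (A * γ X).trace = (A * X).trace) :
    (∀ X Y : Matrix (Fin n) (Fin n) ℂ, ∀ a : ℂ, γ X = X → γ Y = Y →
      γ (X + Y) = X + Y ∧ γ (a • X) = a • X ∧ γ Xᴴ = Xᴴ ∧ γ (X * Y) = X * Y) ∧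
    (∀ X Y : Matrix (Fin n) (Fin n) ℂ, γ X = X → γ Y = Y →
      γ (X * Y) = γ X * γ Y ∧ γ Xᴴ = (γ X)ᴴ) := by
  have hstar {X} (hX : γ X = X) : γ Xᴴ = Xᴴ :=
    map_conjTranspose_of_schwarz hunital hschwarz hA hinv hX
  have hmul {X Y} (hX : γ X = X) (hY : γ Y = Y) : γ (X * Y) = X * Y :=
    map_mul_of_schwarz hunital hschwarz hA hinv hX hY
  refine ⟨fun X Y a hX hY => ⟨?_, ?_, hstar hX, hmul hX hY⟩, fun X Y hX hY => ⟨?_, ?_⟩⟩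
  · rw [map_add, hX, hY]
  · rw [map_smul, hX]
  · rw [hmul hX hY, hX, hY]
  · rw [hstar hX, hX]
end

section
/- For x ≥ 0, x·log x = ∫₍₀,∞₎ ( x/(1+t) − x/(x+t) ) dt, where the integral is with respect to Lebesgue measure on (0,∞) and 0·log 0 := 0. -/
/-! The function `t ↦ x (log (1 + t) - log (x + t))` is an antiderivative of the integrand on
`[0, ∞)`, it vanishes at infinity and equals `-x log x` at `0`. Since the integrand
`x (x - 1) / ((1 + t) (x + t))` has the constant sign of `x - 1`, its improper integral is
the difference of these two values. -/

open Real MeasureTheory Set Filter Topology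

theorem integral_Ioi_of_hasDerivAt_of_constSign {g g' : ℝ → ℝ} {a l : ℝ}
    (hderiv : ∀ x ∈ Ici a, HasDerivAt g (g' x) x)
    (hsign : (∀ x ∈ Ioi a, 0 ≤ g' x) ∨ ∀ x ∈ Ioi a, g' x ≤ 0)
    (hg : Tendsto g atTop (𝓝 l)) : ∫ x in Ioi a, g' x = l - g a :=
  hsign.elim (integral_Ioi_of_hasDerivAt_of_nonneg' hderiv · hg)
    (integral_Ioi_of_hasDerivAt_of_nonpos' hderiv · hg)

theorem hasDerivAt_log_add_sub_log_add {a b t : ℝ} (ha : a + t ≠ 0) (hb : b + t ≠ 0) :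
    HasDerivAt (fun s => log (a + s) - log (b + s)) (1 / (a + t) - 1 / (b + t)) t := by
  have hlog (c : ℝ) (hc : c + t ≠ 0) : HasDerivAt (fun s => log (c + s)) (1 / (c + t)) t := by
    simpa using ((hasDerivAt_id t).const_add c).log hc
  exact (hlog a ha).sub (hlog b hb)

theorem tendsto_log_add_sub_log_add (a b : ℝ) :
    Tendsto (fun t => log (a + t) - log (b + t)) atTop (𝓝 0) := by
  have h := (tendsto_log_comp_add_sub_log a).sub (tendsto_log_comp_add_sub_log b)
  rw [sub_zero] at h
  refine h.congr fun t => ?_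
  rw [add_comm t a, add_comm t b]
  ring

theorem div_one_add_sub_div_add {x t : ℝ} (h1 : 1 + t ≠ 0) (hx : x + t ≠ 0) :
    x / (1 + t) - x / (x + t) = x * (x - 1) / ((1 + t) * (x + t)) := by
  field_simp
  ring

/-- **Integral representation of `x log x`.** For `x ≥ 0`,
`x log x = ∫_{(0,∞)} ( x/(1+t) − x/(x+t) ) dt` (Lebesgue measure), with the convention
`0 · log 0 = 0` (note `Real.log 0 = 0`). -/
theorem xlogx_integral_representation (x : ℝ) (hx : 0 ≤ x) :
    x * Real.log x = ∫ t in Set.Ioi (0 : ℝ), (x / (1 + t) - x / (x + t)) := by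
  rcases hx.eq_or_lt with rfl | hx
  · simp
  have hderiv (t : ℝ) (ht : t ∈ Ici 0) : HasDerivAt (fun s => x * (log (1 + s) - log (x + s)))
      (x / (1 + t) - x / (x + t)) t := by
    refine ((hasDerivAt_log_add_sub_log_add (a := 1) (b := x) (t := t)
      (by linarith [ht.out]) (by linarith [ht.out])).const_mul x).congr_deriv ?_
    ring
  have hsign : (∀ t ∈ Ioi (0 : ℝ), 0 ≤ x / (1 + t) - x / (x + t)) ∨
      ∀ t ∈ Ioi (0 : ℝ), x / (1 + t) - x / (x + t) ≤ 0 := by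
    rcases le_total 1 x with h | h
    · refine .inl fun t (ht : 0 < t) => ?_
      rw [div_one_add_sub_div_add (by positivity) (by positivity)]
      exact div_nonneg (mul_nonneg hx.le (sub_nonneg.2 h)) (by positivity)
    · refine .inr fun t (ht : 0 < t) => ?_
      rw [div_one_add_sub_div_add (by positivity) (by positivity)]
      exact div_nonpos_of_nonpos_of_nonneg
        (mul_nonpos_of_nonneg_of_nonpos hx.le (sub_nonpos.2 h)) (by positivity)
  rw [integral_Ioi_of_hasDerivAt_of_constSign hderiv hsign
    (by simpa using (tendsto_log_add_sub_log_add 1 x).const_mul x)]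
  simp
end

section
/- For positive semidefinite matrices A, B on a finite-dimensional Hilbert space and α ∈ [0,1], one has Tr(A^α B^{1−α}) ≤ (Tr A)^α (Tr B)^{1−α}, where powers are taken on supports (with convention 0^0 = 0 for matrices). Moreover, if supp A ≤ supp B and α ∈ (0,1), equality holds if and only if A is a nonnegative scalar multiple of B. -/
/-!
Diagonalize `A = U diag(a) U*` and `B = V diag(b) V*`. Then
`Tr (f(A) g(B)) = ∑ i j, f(aᵢ) g(bⱼ) tᵢⱼ` with `tᵢⱼ = |(U* V)ᵢⱼ|²`, and `t` is doubly
stochastic because `U* V` is unitary. Writing `aᵢ^α bⱼ^(1-α) tᵢⱼ = (aᵢ tᵢⱼ)^α (bⱼ tᵢⱼ)^(1-α)`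
turns the trace into a Hölder sum over pairs `(i, j)`, whose marginals are `∑ aᵢ = Tr A` and
`∑ bⱼ = Tr B`. Equality in Hölder forces `aᵢ Tr B = bⱼ Tr A` whenever `tᵢⱼ ≠ 0`, which says
exactly that `A = (Tr A / Tr B) • B`; the support condition is what rules out `B = 0 ≠ A`.
-/

open Matrix ComplexOrder

/-- The power `A^α` of a positive semidefinite matrix taken on its support (so that
`A^0` is the support projection; in particular `0^0 = 0` at the scalar level). -/
noncomputable def suppPow {n : ℕ} (A : Matrix (Fin n) (Fin n) ℂ) (α : ℝ) :
    Matrix (Fin n) (Fin n) ℂ :=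
  cfc (fun r : ℝ => if r = 0 then 0 else r ^ α) A


open Finset

namespace Real

variable {ι : Type*} {s : Finset ι} {x y : ι → ℝ} {α : ℝ}

theorem sum_rpow_mul_rpow_le (hx : ∀ i ∈ s, 0 ≤ x i) (hy : ∀ i ∈ s, 0 ≤ y i) (hα0 : 0 ≤ α)
    (hα1 : α ≤ 1) :
    ∑ i ∈ s, x i ^ α * y i ^ (1 - α) ≤ (∑ i ∈ s, x i) ^ α * (∑ i ∈ s, y i) ^ (1 - α) := by
  rcases hα0.eq_or_lt with rfl | hα0
  · simp
  rcases hα1.eq_or_lt with rfl | hα1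
  · simp
  have h := inner_le_Lp_mul_Lq_of_nonneg s (HolderConjugate.inv_one_sub_inv hα0 hα1)
    (fun i hi => rpow_nonneg (hx i hi) α) (fun i hi => rpow_nonneg (hy i hi) (1 - α))
  rwa [sum_congr rfl fun i hi => rpow_rpow_inv (hx i hi) hα0.ne',
    sum_congr rfl fun i hi => rpow_rpow_inv (hy i hi) (sub_ne_zero.2 hα1.ne'), one_div, inv_inv,
    one_div, inv_inv] at h

theorem sum_rpow_mul_rpow_eq_iff (hx : ∀ i ∈ s, 0 ≤ x i) (hy : ∀ i ∈ s, 0 ≤ y i) (hα0 : 0 < α)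
    (hα1 : α < 1) :
    ∑ i ∈ s, x i ^ α * y i ^ (1 - α) = (∑ i ∈ s, x i) ^ α * (∑ i ∈ s, y i) ^ (1 - α) ↔
      ∀ i ∈ s, (∑ j ∈ s, y j) * x i = (∑ j ∈ s, x j) * y i := by
  have hα1' : 0 < 1 - α := sub_pos.2 hα1
  obtain hX | hX := (sum_nonneg hx).eq_or_lt
  · have hx0 := (sum_eq_zero_iff_of_nonneg hx).1 hX.symm
    simp +contextual [hx0, zero_rpow hα0.ne']
  obtain hY | hY := (sum_nonneg hy).eq_or_lt
  · have hy0 := (sum_eq_zero_iff_of_nonneg hy).1 hY.symm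
    simp +contextual [hy0, zero_rpow hα1'.ne']
  set X := ∑ i ∈ s, x i
  set Y := ∑ i ∈ s, y i
  -- Weighted AM-GM for each normalized pair `(x i / X, y i / Y)`; the bounds add up to exactly
  -- `X ^ α * Y ^ (1 - α)`, so equality forces equality in every term.
  have hC : 0 < X ^ α * Y ^ (1 - α) := by positivity
  have hscale : ∀ i ∈ s, x i ^ α * y i ^ (1 - α) =
      X ^ α * Y ^ (1 - α) * ((x i / X) ^ α * (y i / Y) ^ (1 - α)) := fun i hi => by
    rw [div_rpow (hx i hi) hX.le, div_rpow (hy i hi) hY.le]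
    field_simp
  have hamgm : ∀ i ∈ s, (x i / X) ^ α * (y i / Y) ^ (1 - α) ≤
      α * (x i / X) + (1 - α) * (y i / Y) := fun i hi =>
    geom_mean_le_arith_mean2_weighted hα0.le hα1'.le (div_nonneg (hx i hi) hX.le)
      (div_nonneg (hy i hi) hY.le) (add_sub_cancel α 1)
  have hmean : ∑ i ∈ s, X ^ α * Y ^ (1 - α) * (α * (x i / X) + (1 - α) * (y i / Y)) =
      X ^ α * Y ^ (1 - α) := by
    rw [← mul_sum, sum_add_distrib, ← mul_sum, ← mul_sum, ← sum_div, ← sum_div, div_self hX.ne',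
      div_self hY.ne']
    ring
  have hsum := sum_eq_sum_iff_of_le fun i hi => mul_le_mul_of_nonneg_left (hamgm i hi) hC.le
  rw [hmean] at hsum
  rw [sum_congr rfl hscale, hsum]
  refine forall₂_congr fun i hi => ?_
  rw [mul_right_inj' hC.ne', geom_mean_eq_arith_mean2_weighted_iff_of_pos hα0 hα1'
    (div_nonneg (hx i hi) hX.le) (div_nonneg (hy i hi) hY.le) (add_sub_cancel α 1),
    div_eq_div_iff hX.ne' hY.ne', mul_comm (x i), mul_comm X]

end Real

namespace Matrix

variable {n : Type*} [Fintype n] {M : Matrix n n ℝ} {a b : n → ℝ} {α : ℝ}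

theorem sum_sum_rpow_mul_rpow_mul_eq_sum_prod (hM : ∀ i j, 0 ≤ M i j) (ha : ∀ i, 0 ≤ a i)
    (hb : ∀ j, 0 ≤ b j) :
    ∑ i, ∑ j, a i ^ α * b j ^ (1 - α) * M i j =
      ∑ p : n × n, (a p.1 * M p.1 p.2) ^ α * (b p.2 * M p.1 p.2) ^ (1 - α) := by
  rw [Fintype.sum_prod_type]
  refine sum_congr rfl fun i _ => sum_congr rfl fun j _ => ?_
  have hM1 : M i j ^ α * M i j ^ (1 - α) = M i j := by
    rw [← Real.rpow_add' (hM i j) (by norm_num), add_sub_cancel, Real.rpow_one]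
  rw [Real.mul_rpow (ha i) (hM i j), Real.mul_rpow (hb j) (hM i j)]
  linear_combination -(a i ^ α * b j ^ (1 - α)) * hM1

variable [DecidableEq n]

theorem sum_prod_mul_fst_of_mem_doublyStochastic (hM : M ∈ doublyStochastic ℝ n) (a : n → ℝ) :
    ∑ p : n × n, a p.1 * M p.1 p.2 = ∑ i, a i := by
  simp_rw [Fintype.sum_prod_type, ← mul_sum, sum_row_of_mem_doublyStochastic hM, mul_one]

theorem sum_prod_mul_snd_of_mem_doublyStochastic (hM : M ∈ doublyStochastic ℝ n) (b : n → ℝ) :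
    ∑ p : n × n, b p.2 * M p.1 p.2 = ∑ j, b j := by
  simp_rw [Fintype.sum_prod_type_right, ← mul_sum, sum_col_of_mem_doublyStochastic hM, mul_one]

theorem sum_sum_rpow_mul_rpow_mul_le (hM : M ∈ doublyStochastic ℝ n) (ha : ∀ i, 0 ≤ a i)
    (hb : ∀ j, 0 ≤ b j) (hα0 : 0 ≤ α) (hα1 : α ≤ 1) :
    ∑ i, ∑ j, a i ^ α * b j ^ (1 - α) * M i j ≤ (∑ i, a i) ^ α * (∑ j, b j) ^ (1 - α) := by
  have h := Real.sum_rpow_mul_rpow_le (s := univ) (x := fun p : n × n => a p.1 * M p.1 p.2)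
    (y := fun p => b p.2 * M p.1 p.2) (fun p _ => mul_nonneg (ha _) (hM.1 _ _))
    (fun p _ => mul_nonneg (hb _) (hM.1 _ _)) hα0 hα1
  rwa [sum_prod_mul_fst_of_mem_doublyStochastic hM, sum_prod_mul_snd_of_mem_doublyStochastic hM,
    ← sum_sum_rpow_mul_rpow_mul_eq_sum_prod hM.1 ha hb] at h

theorem sum_sum_rpow_mul_rpow_mul_eq_iff (hM : M ∈ doublyStochastic ℝ n) (ha : ∀ i, 0 ≤ a i)
    (hb : ∀ j, 0 ≤ b j) (hα0 : 0 < α) (hα1 : α < 1) :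
    ∑ i, ∑ j, a i ^ α * b j ^ (1 - α) * M i j = (∑ i, a i) ^ α * (∑ j, b j) ^ (1 - α) ↔
      ∀ i j, M i j ≠ 0 → (∑ j, b j) * a i = (∑ i, a i) * b j := by
  have h := Real.sum_rpow_mul_rpow_eq_iff (s := univ) (x := fun p : n × n => a p.1 * M p.1 p.2)
    (y := fun p => b p.2 * M p.1 p.2) (fun p _ => mul_nonneg (ha _) (hM.1 _ _))
    (fun p _ => mul_nonneg (hb _) (hM.1 _ _)) hα0 hα1
  rw [sum_prod_mul_fst_of_mem_doublyStochastic hM, sum_prod_mul_snd_of_mem_doublyStochastic hM] at h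
  rw [sum_sum_rpow_mul_rpow_mul_eq_sum_prod hM.1 ha hb, h]
  simp only [mem_univ, forall_const, Prod.forall, ← mul_assoc, mul_eq_mul_right_iff]
  exact forall₂_congr fun i j => or_iff_not_imp_right

theorem map_normSq_mem_doublyStochastic {W : Matrix n n ℂ} (hW : W ∈ unitaryGroup n ℂ) :
    W.map Complex.normSq ∈ doublyStochastic ℝ n := by
  refine mem_doublyStochastic_iff_sum.2
    ⟨fun i j => Complex.normSq_nonneg _, fun i => ?_, fun j => ?_⟩
  · have h := congr_fun₂ (mem_unitaryGroup_iff.1 hW) i i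
    simp only [mul_apply, star_apply, RCLike.star_def, Complex.mul_conj, one_apply_eq] at h
    exact_mod_cast h
  · have h := congr_fun₂ (mem_unitaryGroup_iff'.1 hW) j j
    simp only [mul_apply, star_apply, RCLike.star_def, mul_comm (starRingEnd ℂ _),
      Complex.mul_conj, one_apply_eq] at h
    exact_mod_cast h

theorem trace_conj_diagonal_mul_conj_diagonal (U V : Matrix n n ℂ) (d e : n → ℝ) :
    (U * diagonal (RCLike.ofReal ∘ d) * star U *
        (V * diagonal (RCLike.ofReal ∘ e) * star V)).trace =
      ((∑ i, ∑ j, d i * e j * (star U * V).map Complex.normSq i j : ℝ) : ℂ) := by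
  calc _ = (diagonal (RCLike.ofReal ∘ d) * (star U * V) * diagonal (RCLike.ofReal ∘ e) *
        star (star U * V)).trace := by
        rw [star_mul, star_star]
        simp only [mul_assoc]
        rw [trace_mul_comm U]
        simp only [mul_assoc]
    _ = _ := by
      simp only [trace, diag_apply, mul_apply (M := diagonal _ * _ * diagonal _), mul_diagonal,
        diagonal_mul, star_apply, map_apply, RCLike.star_def, RCLike.ofReal_eq_complex_ofReal,
        Function.comp_apply]
      push_cast
      refine sum_congr rfl fun i _ => sum_congr rfl fun j _ => ?_
      rw [Complex.normSq_eq_conj_mul_self]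
      ring

theorem conj_diagonal_eq_smul_conj_diagonal_iff (U V : unitaryGroup n ℂ) (d e : n → ℝ) (c : ℝ) :
    (U : Matrix n n ℂ) * diagonal (RCLike.ofReal ∘ d) * star (U : Matrix n n ℂ) =
        c • ((V : Matrix n n ℂ) * diagonal (RCLike.ofReal ∘ e) * star (V : Matrix n n ℂ)) ↔
      ∀ i j, (star (U : Matrix n n ℂ) * V) i j ≠ 0 → d i = c * e j := by
  rw [← Unitary.mul_left_inj V, ← Unitary.mul_right_inj (star U)]
  simp only [smul_mul_assoc, mul_smul_comm, Unitary.coe_star, ← mul_assoc,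
    Unitary.coe_star_mul_self, one_mul]
  simp only [mul_assoc, Unitary.coe_star_mul_self, mul_one]
  rw [← mul_assoc (star (U : Matrix n n ℂ)), ← Matrix.ext_iff]
  refine forall₂_congr fun i j => ?_
  simp only [smul_apply, diagonal_mul, mul_diagonal, Function.comp_apply,
    RCLike.ofReal_eq_complex_ofReal, Complex.real_smul]
  have hsub : (d i : ℂ) * (star (U : Matrix n n ℂ) * V) i j -
      c * ((star (U : Matrix n n ℂ) * V) i j * e j) =
      ((d i - c * e j : ℝ) : ℂ) * (star (U : Matrix n n ℂ) * V) i j := by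
    push_cast
    ring
  rw [← sub_eq_zero, hsub, mul_eq_zero, Complex.ofReal_eq_zero, sub_eq_zero, or_iff_not_imp_right]

namespace IsHermitian

variable {A B : Matrix n n ℂ}

theorem re_trace_eq_sum_eigenvalues (hA : A.IsHermitian) : A.trace.re = ∑ i, hA.eigenvalues i := by
  simp [hA.trace_eq_sum_eigenvalues]

noncomputable def eigenOverlap (hA : A.IsHermitian) (hB : B.IsHermitian) : Matrix n n ℝ :=
  (star (hA.eigenvectorUnitary : Matrix n n ℂ) * hB.eigenvectorUnitary).map Complex.normSq

theorem eigenOverlap_mem_doublyStochastic (hA : A.IsHermitian) (hB : B.IsHermitian) :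
    eigenOverlap hA hB ∈ doublyStochastic ℝ n :=
  map_normSq_mem_doublyStochastic
    (mul_mem (Unitary.star_mem hA.eigenvectorUnitary.2) hB.eigenvectorUnitary.2)

theorem trace_cfc_mul_cfc (hA : A.IsHermitian) (hB : B.IsHermitian) (f g : ℝ → ℝ) :
    (cfc f A * cfc g B).trace =
      ((∑ i, ∑ j, f (hA.eigenvalues i) * g (hB.eigenvalues j) * eigenOverlap hA hB i j : ℝ) :
        ℂ) := by
  rw [hA.cfc_eq, hB.cfc_eq, IsHermitian.cfc, IsHermitian.cfc, Unitary.conjStarAlgAut_apply,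
    Unitary.conjStarAlgAut_apply]
  exact trace_conj_diagonal_mul_conj_diagonal _ _ (f ∘ hA.eigenvalues) (g ∘ hB.eigenvalues)

theorem eq_smul_iff_eigenOverlap (hA : A.IsHermitian) (hB : B.IsHermitian) (c : ℝ) :
    A = c • B ↔
      ∀ i j, eigenOverlap hA hB i j ≠ 0 → hA.eigenvalues i = c * hB.eigenvalues j := by
  conv_lhs => rw [hA.spectral_theorem, hB.spectral_theorem]
  simp only [Unitary.conjStarAlgAut_apply, conj_diagonal_eq_smul_conj_diagonal_iff, eigenOverlap,
    map_apply, ne_eq, map_eq_zero]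

end IsHermitian

theorem PosSemidef.exists_nonneg_eq_smul_iff {A B : Matrix n n ℂ} (hA : A.PosSemidef)
    (hB : B.PosSemidef) (hAB : LinearMap.range A.mulVecLin ≤ LinearMap.range B.mulVecLin) :
    (∃ c : ℝ, 0 ≤ c ∧ A = c • B) ↔
      ∀ i j, hA.1.eigenOverlap hB.1 i j ≠ 0 →
        (∑ j, hB.1.eigenvalues j) * hA.1.eigenvalues i =
          (∑ i, hA.1.eigenvalues i) * hB.1.eigenvalues j := by
  constructor
  · rintro ⟨c, -, hc⟩ i j hij
    have hT : ∑ i, hA.1.eigenvalues i = c * ∑ j, hB.1.eigenvalues j := by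
      rw [← hA.1.re_trace_eq_sum_eigenvalues, ← hB.1.re_trace_eq_sum_eigenvalues, hc, trace_smul,
        Complex.real_smul, Complex.re_ofReal_mul]
    rw [(hA.1.eq_smul_iff_eigenOverlap hB.1 c).1 hc i j hij, hT]
    ring
  intro h
  by_cases hTB0 : ∑ j, hB.1.eigenvalues j = 0
  · have hB0 : B = 0 := by
      rw [← hB.trace_eq_zero_iff, hB.1.trace_eq_sum_eigenvalues, ← RCLike.ofReal_sum, hTB0,
        RCLike.ofReal_zero]
    have hA0 : A = 0 := by
      have hrange : LinearMap.range A.mulVecLin = ⊥ := le_bot_iff.1 (by simpa [hB0] using hAB)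
      exact toLin'.injective (by rw [toLin'_apply', LinearMap.range_eq_bot.1 hrange, map_zero])
    exact ⟨0, le_rfl, by rw [hA0, zero_smul]⟩
  refine ⟨(∑ i, hA.1.eigenvalues i) / ∑ j, hB.1.eigenvalues j,
    div_nonneg (sum_nonneg fun i _ => hA.eigenvalues_nonneg i)
      (sum_nonneg fun j _ => hB.eigenvalues_nonneg j),
    (hA.1.eq_smul_iff_eigenOverlap hB.1 _).2 fun i j hij => ?_⟩
  rw [div_mul_eq_mul_div, eq_div_iff hTB0, mul_comm, h i j hij]

end Matrix

/-- **Trace Hölder inequality and its equality case.** For positive semidefinite `A, B`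
and `α ∈ [0,1]`, `Tr (A^α B^{1−α}) ≤ (Tr A)^α (Tr B)^{1−α}` (powers of matrices taken on
supports).  Moreover, if `supp A ≤ supp B` and `α ∈ (0,1)`, equality holds iff `A` is a
nonnegative scalar multiple of `B`. -/
theorem trace_holder_inequality {n : ℕ} (A B : Matrix (Fin n) (Fin n) ℂ)
    (hA : A.PosSemidef) (hB : B.PosSemidef) (α : ℝ) (hα0 : 0 ≤ α) (hα1 : α ≤ 1) :
    (suppPow A α * suppPow B (1 - α)).trace ≤
      ((A.trace.re ^ α * B.trace.re ^ (1 - α) : ℝ) : ℂ) ∧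
    (LinearMap.range A.mulVecLin ≤ LinearMap.range B.mulVecLin → 0 < α → α < 1 →
      ((suppPow A α * suppPow B (1 - α)).trace =
          ((A.trace.re ^ α * B.trace.re ^ (1 - α) : ℝ) : ℂ) ↔
        ∃ c : ℝ, 0 ≤ c ∧ A = (c : ℝ) • B)) := by
  have hsupp_nonneg (β r : ℝ) (hr : 0 ≤ r) : 0 ≤ if r = 0 then 0 else r ^ β := by
    split_ifs
    exacts [le_rfl, Real.rpow_nonneg hr β]
  have hsupp_le (β r : ℝ) (hr : 0 ≤ r) : (if r = 0 then 0 else r ^ β) ≤ r ^ β := by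
    split_ifs
    exacts [Real.rpow_nonneg hr β, le_rfl]
  have hsupp_eq (β r : ℝ) (hβ : β ≠ 0) : (if r = 0 then 0 else r ^ β) = r ^ β := by
    split_ifs with hr
    · rw [hr, Real.zero_rpow hβ]
    · rfl
  have ha := hA.eigenvalues_nonneg
  have hb := hB.eigenvalues_nonneg
  have hM := hA.1.eigenOverlap_mem_doublyStochastic hB.1
  rw [suppPow, suppPow, hA.1.trace_cfc_mul_cfc hB.1, hA.1.re_trace_eq_sum_eigenvalues,
    hB.1.re_trace_eq_sum_eigenvalues]
  refine ⟨?_, fun hAB hα0 hα1 => ?_⟩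
  · refine Complex.real_le_real.2 (le_trans (sum_le_sum fun i _ => sum_le_sum fun j _ => ?_)
      (sum_sum_rpow_mul_rpow_mul_le hM ha hb hα0 hα1))
    exact mul_le_mul_of_nonneg_right (mul_le_mul (hsupp_le α _ (ha i)) (hsupp_le _ _ (hb j))
      (hsupp_nonneg _ _ (hb j)) (Real.rpow_nonneg (ha i) α)) (hM.1 i j)
  · simp only [hsupp_eq _ _ hα0.ne', hsupp_eq _ _ (sub_ne_zero.2 hα1.ne')]
    rw [Complex.ofReal_inj, sum_sum_rpow_mul_rpow_mul_eq_iff hM ha hb hα0 hα1,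
      hA.exists_nonneg_eq_smul_iff hB hAB]
end
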